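/- arXiv:2104.08938 — 4 statements merged into one kernel-verified Lean document; each statement's English description precedes it below -/
import Mathlib

section
/- For every n ∈ ℕ, the (2n−1)-th derivative of the hyperbolic tangent function at 0 satisfies |tanh^{(2n−1)}(0)| ≥ 1. -/
/-!
Write `tₖ` for `tanh⁽ᵏ⁾(0)`. Since `tanh' = 1 - tanh²`, the Leibniz rule gives
`t_{m+1} = -∑ₖ C(m,k) tₖ t_{m-k}` for `m > 0`. As `tanh` is odd, `tₖ = 0` for even `k`, and
`(-1)ⁿ t_{2n+1} ≥ 1` follows by strong induction: in the recurrence for `t_{2n+1}` every product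
`t_{2i+1} t_{2j+1}` with `i + j = n - 1` has sign `(-1)ⁿ⁻¹`, so all terms of `-∑` have sign `(-1)ⁿ`,
and the term `k = 1` alone has absolute value `2n · |t_{2n-1}| ≥ 1`.
-/

open Finset

theorem Function.Odd.iteratedDeriv_eq_zero_of_even {F : Type*} [NormedAddCommGroup F]
    [NormedSpace ℝ F] {f : ℝ → F} (hf : Function.Odd f) {k : ℕ} (hk : Even k) :
    iteratedDeriv k f 0 = 0 := by
  have h := iteratedDeriv_comp_neg k f 0
  simp only [hf _, iteratedDeriv_fun_neg, hk.neg_one_pow, one_smul, neg_zero] at h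
  linear_combination (norm := module) (-1 / 2 : ℝ) • h

namespace Real

theorem contDiff_tanh {n : WithTop ℕ∞} : ContDiff ℝ n tanh := by
  rw [funext tanh_eq_sinh_div_cosh]
  exact contDiff_sinh.div contDiff_cosh fun x => (cosh_pos x).ne'

theorem hasDerivAt_tanh (x : ℝ) : HasDerivAt tanh (1 - tanh x ^ 2) x := by
  rw [funext tanh_eq_sinh_div_cosh]
  refine ((hasDerivAt_sinh x).div (hasDerivAt_cosh x) (cosh_pos x).ne').congr_deriv ?_
  field_simp

theorem deriv_tanh : deriv tanh = fun x => 1 - tanh x ^ 2 :=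
  funext fun x => (hasDerivAt_tanh x).deriv

theorem iteratedDeriv_succ_tanh {m : ℕ} (hm : 0 < m) (x : ℝ) :
    iteratedDeriv (m + 1) tanh x = -∑ k ∈ range (m + 1),
      m.choose k * iteratedDeriv k tanh x * iteratedDeriv (m - k) tanh x := by
  rw [iteratedDeriv_succ', deriv_tanh, iteratedDeriv_const_sub hm, iteratedDeriv_neg]
  simp only [sq]
  rw [iteratedDeriv_fun_mul contDiff_tanh.contDiffAt contDiff_tanh.contDiffAt]

theorem neg_one_pow_mul_choose_mul_iteratedDeriv_tanh_zero_nonneg {m k : ℕ}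
    (hodd : ∀ i ≤ m, 1 ≤ (-1 : ℝ) ^ i * iteratedDeriv (2 * i + 1) tanh 0) (hk : k ≤ 2 * m + 2) :
    0 ≤ (-1 : ℝ) ^ m * ((2 * m + 2).choose k * iteratedDeriv k tanh 0 *
      iteratedDeriv (2 * m + 2 - k) tanh 0) := by
  rcases Nat.even_or_odd k with heven | ⟨i, rfl⟩
  · simp [Function.Odd.iteratedDeriv_eq_zero_of_even tanh_neg heven]
  have hi : i ≤ m := by omega
  have hsub : 2 * m + 2 - (2 * i + 1) = 2 * (m - i) + 1 := by omega
  have hsign : (-1 : ℝ) ^ m = (-1) ^ i * (-1) ^ (m - i) := by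
    rw [← pow_add, Nat.add_sub_cancel' hi]
  have h₁ := hodd i hi
  have h₂ := hodd (m - i) (Nat.sub_le m i)
  calc (0 : ℝ) ≤ (2 * m + 2).choose (2 * i + 1) * (((-1) ^ i * iteratedDeriv (2 * i + 1) tanh 0) *
        ((-1) ^ (m - i) * iteratedDeriv (2 * (m - i) + 1) tanh 0)) :=
        mul_nonneg (Nat.cast_nonneg _) (mul_nonneg (by linarith) (by linarith))
    _ = _ := by rw [hsub, hsign]; ring

theorem one_le_neg_one_pow_mul_iteratedDeriv_tanh_zero (n : ℕ) :
    1 ≤ (-1 : ℝ) ^ n * iteratedDeriv (2 * n + 1) tanh 0 := by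
  induction n using Nat.strong_induction_on with
  | _ n ih =>
  rcases n with _ | m
  · simp [deriv_tanh]
  have hodd : ∀ i ≤ m, 1 ≤ (-1 : ℝ) ^ i * iteratedDeriv (2 * i + 1) tanh 0 :=
    fun i hi => ih i (by omega)
  set t : ℕ → ℝ := fun k => iteratedDeriv k tanh 0
  have hfirst : 1 ≤ (-1) ^ m * ((2 * m + 2).choose 1 * t 1 * t (2 * m + 2 - 1)) := by
    have ht₁ : t 1 = 1 := by simp [t, deriv_tanh]
    have hm := hodd m le_rfl
    rw [ht₁, Nat.choose_one_right, show 2 * m + 2 - 1 = 2 * m + 1 by omega]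
    push_cast
    nlinarith
  show 1 ≤ (-1) ^ (m + 1) * t (2 * m + 2 + 1)
  calc (1 : ℝ) ≤ (-1) ^ m * ((2 * m + 2).choose 1 * t 1 * t (2 * m + 2 - 1)) := hfirst
    _ ≤ ∑ k ∈ range (2 * m + 3), (-1) ^ m * ((2 * m + 2).choose k * t k * t (2 * m + 2 - k)) :=
      single_le_sum (fun k hk => neg_one_pow_mul_choose_mul_iteratedDeriv_tanh_zero_nonneg hodd
        (Nat.lt_succ_iff.mp (mem_range.mp hk))) (mem_range.mpr (by omega))
    _ = (-1) ^ (m + 1) * t (2 * m + 2 + 1) := by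
      rw [← mul_sum, show t (2 * m + 2 + 1) = _ from iteratedDeriv_succ_tanh (by omega) 0]
      ring

end Real

/-- **Lemma A.1.** For every `n ≥ 1`, the `(2n-1)`-th derivative of `tanh` at `0` has
absolute value at least `1`. -/
theorem abs_iteratedDeriv_tanh_zero_ge_one (n : ℕ) (hn : 1 ≤ n) :
    1 ≤ |iteratedDeriv (2 * n - 1) Real.tanh 0| := by
  obtain ⟨m, rfl⟩ := Nat.exists_eq_add_of_le' hn
  rw [show 2 * (m + 1) - 1 = 2 * m + 1 by omega]
  calc (1 : ℝ) ≤ (-1) ^ m * iteratedDeriv (2 * m + 1) Real.tanh 0 :=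
        Real.one_le_neg_one_pow_mul_iteratedDeriv_tanh_zero m
    _ ≤ |(-1) ^ m * iteratedDeriv (2 * m + 1) Real.tanh 0| := le_abs_self _
    _ = |iteratedDeriv (2 * m + 1) Real.tanh 0| := by simp [abs_mul]
end

section
/- Let n, q ∈ ℕ and let P_{n,q} = {α ∈ ℕ₀^q : |α| = n}. Define the Dyson matrix D, with rows and columns indexed by P_{n,q}, by D_{α,β} = (n!/(β₁!⋯β_q!)) · (α₁^{β₁}⋯α_q^{β_q}) / n^n for α, β ∈ P_{n,q}. Then D is invertible and its operator norm on ℓ^∞ (the maximum over rows of the sum of absolute values of the entries of D^{−1}) satisfies ‖D^{−1}‖_∞ ≤ (n!)³ |P_{n,q}|² 2^n. -/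
/-!
The inverse is written down explicitly. For `α ∈ P_{n,q}` the polynomial
`p_α(x) = ∏ᵢ ∏_{j < αᵢ} (n xᵢ - j (x₁ + ⋯ + x_q))` is homogeneous of degree `n`, and at a point
`β ∈ P_{n,q}` each factor is `n (βᵢ - j)`, so `p_α(β) = n^n ∏ᵢ βᵢ (βᵢ - 1) ⋯ (βᵢ - αᵢ + 1)`. Since
`|α| = |β|`, this is `n^n α!` for `β = α` and `0` otherwise (some `βᵢ < αᵢ`). Hence the coefficients
`c_{α,γ}` of `p_α`, divided by `(n choose γ) α!`, form a right inverse of `D`. Expanding `p_α` over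
all choices of one variable per factor bounds `|c_{α,γ}|` by `(q n)^n`, and
`(q n)^n ≤ (n!)³ |P_{n,q}|` because `n^n ≤ (n!)²` and `q^n = ∑_γ (n choose γ) ≤ n! |P_{n,q}|`.
-/

open Finset

/-- The Dyson matrix `D_{α,β} = (n choose β) α^β / n^n`, with rows and columns indexed by
the multi-indices `β ∈ ℕ₀^q` with `|β| = n`. -/
noncomputable def dysonMatrix (n q : ℕ) :
    Matrix ↥(Finset.Nat.antidiagonalTuple q n) ↥(Finset.Nat.antidiagonalTuple q n) ℝ :=
  fun α β =>
    (Nat.multinomial Finset.univ (β : Fin q → ℕ) : ℝ) *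
      (∏ i, ((α : Fin q → ℕ) i : ℝ) ^ ((β : Fin q → ℕ) i)) / (n : ℝ) ^ n

section LinearFormProduct

variable {ι R : Type*} [Fintype ι] {q : ℕ}

def fiberCount (g : ι → Fin q) (k : Fin q) : ℕ := #{t | g t = k}

lemma prod_comp_eq_prod_pow_fiberCount {M : Type*} [CommMonoid M] (g : ι → Fin q)
    (x : Fin q → M) : ∏ t, x (g t) = ∏ k, x k ^ fiberCount g k := by
  simp_rw [fiberCount, ← prod_const, prod_fiberwise']

lemma fiberCount_mem_antidiagonalTuple (g : ι → Fin q) :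
    fiberCount g ∈ Nat.antidiagonalTuple q (Fintype.card ι) :=
  Nat.mem_antidiagonalTuple.mpr <| by
    simpa [fiberCount] using (card_eq_sum_card_fiberwise (f := g) (s := univ) (t := univ)
      fun t _ => mem_univ (g t)).symm

variable [DecidableEq ι]

def linearFormProdCoeff [CommSemiring R] (a : ι → Fin q → R) (γ : Fin q → ℕ) : R :=
  ∑ g : ι → Fin q with fiberCount g = γ, ∏ t, a t (g t)

theorem prod_sum_mul_eq_sum_linearFormProdCoeff [CommSemiring R] (a : ι → Fin q → R)
    (x : Fin q → R) :
    ∏ t, ∑ k, a t k * x k =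
      ∑ γ ∈ Nat.antidiagonalTuple q (Fintype.card ι),
        linearFormProdCoeff a γ * ∏ k, x k ^ γ k := by
  rw [Fintype.prod_sum, ← sum_fiberwise_of_maps_to fun g _ => fiberCount_mem_antidiagonalTuple g]
  refine sum_congr rfl fun γ _ => ?_
  rw [linearFormProdCoeff, sum_mul]
  refine sum_congr rfl fun g hg => ?_
  rw [prod_mul_distrib, prod_comp_eq_prod_pow_fiberCount g x, (mem_filter.mp hg).2]

theorem abs_linearFormProdCoeff_le [CommRing R] [LinearOrder R] [IsStrictOrderedRing R]
    (a : ι → Fin q → R) (γ : Fin q → ℕ) :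
    |linearFormProdCoeff a γ| ≤ ∏ t, ∑ k, |a t k| :=
  calc |linearFormProdCoeff a γ| ≤ ∑ g : ι → Fin q with fiberCount g = γ, ∏ t, |a t (g t)| :=
        (abs_sum_le_sum_abs _ _).trans_eq (sum_congr rfl fun _ _ => abs_prod _ _)
    _ ≤ ∑ g : ι → Fin q, ∏ t, |a t (g t)| :=
        sum_le_sum_of_subset_of_nonneg (filter_subset _ _) fun _ _ _ =>
          prod_nonneg fun _ _ => abs_nonneg _
    _ = ∏ t, ∑ k, |a t k| := (Fintype.prod_sum fun t k => |a t k|).symm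

end LinearFormProduct

lemma prod_descFactorial_eq_ite {ι : Type*} [Fintype ι] {α β : ι → ℕ}
    (h : ∑ i, α i = ∑ i, β i) :
    ∏ i, (β i).descFactorial (α i) = if α = β then ∏ i, (α i).factorial else 0 := by
  split_ifs with hαβ
  · simp [hαβ, Nat.descFactorial_self]
  · have hlt : ∃ i, β i < α i := by
      by_contra! hle
      exact hαβ (funext fun i => (sum_eq_sum_iff_of_le fun i _ => hle i).mp h i (mem_univ i))
    obtain ⟨i, hi⟩ := hlt
    exact prod_eq_zero (mem_univ i) (Nat.descFactorial_eq_zero_iff_lt.mpr hi)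

lemma prod_range_natCast_sub_eq_descFactorial (R : Type*) [CommRing R] (b k : ℕ) :
    ∏ j ∈ range k, ((b : R) - j) = b.descFactorial k := by
  rw [← descPochhammer_eval_eq_prod_range, descPochhammer_eval_eq_descFactorial]

theorem Nat.pow_self_le_factorial_sq (n : ℕ) : n ^ n ≤ n.factorial ^ 2 := by
  have hfac : ∏ i ∈ range n, (i + 1) = n.factorial := prod_range_add_one_eq_factorial n
  have hfac' : ∏ i ∈ range n, (n - i) = n.factorial := by
    rw [← hfac, ← prod_range_reflect]
    exact prod_congr rfl fun i hi => by have := mem_range.mp hi; omega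
  calc n ^ n = ∏ _i ∈ range n, n := by rw [prod_const, card_range]
    _ ≤ ∏ i ∈ range n, (i + 1) * (n - i) := prod_le_prod' fun i hi => by
        have := mem_range.mp hi
        nlinarith [Nat.sub_add_cancel this.le]
    _ = n.factorial ^ 2 := by rw [prod_mul_distrib, hfac, hfac', sq]

theorem Nat.pow_le_factorial_mul_card_antidiagonalTuple (q n : ℕ) :
    q ^ n ≤ n.factorial * #(Nat.antidiagonalTuple q n) := by
  have hmultinomial : q ^ n = ∑ γ ∈ Nat.antidiagonalTuple q n, Nat.multinomial univ γ := by
    simpa [← piAntidiag_univ_fin_eq_antidiagonalTuple] using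
      sum_pow_eq_sum_piAntidiag (univ : Finset (Fin q)) (fun _ => (1 : ℕ)) n
  rw [hmultinomial, mul_comm, ← smul_eq_mul, ← sum_const]
  refine sum_le_sum fun γ hγ => ?_
  rw [← Nat.mem_antidiagonalTuple.mp hγ]
  exact (Nat.le_mul_of_pos_left _ (prod_pos fun i _ => (γ i).factorial_pos)).trans_eq
    (Nat.multinomial_spec _ _)

theorem Nat.card_antidiagonalTuple_mul_pow_le (q n : ℕ) :
    #(Nat.antidiagonalTuple q n) * (q * n) ^ n ≤
      n.factorial ^ 3 * #(Nat.antidiagonalTuple q n) ^ 2 :=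
  calc #(Nat.antidiagonalTuple q n) * (q * n) ^ n
      = #(Nat.antidiagonalTuple q n) * (q ^ n * n ^ n) := by rw [mul_pow]
    _ ≤ #(Nat.antidiagonalTuple q n) *
          ((n.factorial * #(Nat.antidiagonalTuple q n)) * n.factorial ^ 2) :=
        Nat.mul_le_mul_left _ (Nat.mul_le_mul (pow_le_factorial_mul_card_antidiagonalTuple q n)
          (pow_self_le_factorial_sq n))
    _ = n.factorial ^ 3 * #(Nat.antidiagonalTuple q n) ^ 2 := by ring

section DysonInverse

variable {q : ℕ}

/-- `dysonForm n α ⟨i, j⟩` is the coefficient vector of the linear form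
`x ↦ n xᵢ - j (x₁ + ⋯ + x_q)`, which equals `n (xᵢ - j)` on `|x| = n`. -/
def dysonForm (n : ℕ) (α : Fin q → ℕ) (t : (i : Fin q) × Fin (α i)) (k : Fin q) : ℝ :=
  (if k = t.1 then (n : ℝ) else 0) - t.2

lemma sum_dysonForm_mul {n : ℕ} (α : Fin q → ℕ) {β : Fin q → ℕ} (hβ : ∑ i, β i = n)
    (t : (i : Fin q) × Fin (α i)) :
    ∑ k, dysonForm n α t k * β k = n * ((β t.1 : ℝ) - t.2) := by
  have hβ' : ∑ k, (β k : ℝ) = n := by exact_mod_cast hβ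
  simp only [dysonForm, sub_mul, ite_mul, zero_mul, sum_sub_distrib, sum_ite_eq', mem_univ,
    if_true, ← mul_sum, hβ']
  ring

lemma prod_sum_dysonForm_mul {n : ℕ} (α : Fin q → ℕ) {β : Fin q → ℕ} (hβ : ∑ i, β i = n) :
    ∏ t, ∑ k, dysonForm n α t k * β k =
      (n : ℝ) ^ (∑ i, α i) * ∏ i, ((β i).descFactorial (α i) : ℝ) := by
  simp_rw [sum_dysonForm_mul α hβ, prod_mul_distrib, prod_const, Finset.card_univ,
    Fintype.card_sigma, Fintype.card_fin]
  rw [Fintype.prod_sigma]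
  congr 1
  refine prod_congr rfl fun i _ => ?_
  rw [Fin.prod_univ_eq_prod_range (fun j => ((β i : ℝ) - j)),
    prod_range_natCast_sub_eq_descFactorial]

lemma abs_dysonForm_le {n : ℕ} {α : Fin q → ℕ} (hα : ∑ i, α i = n)
    (t : (i : Fin q) × Fin (α i)) (k : Fin q) : |dysonForm n α t k| ≤ n := by
  have hj : (t.2 : ℝ) ≤ n := by
    have hαi : α t.1 ≤ n := hα ▸ single_le_sum (fun i _ => Nat.zero_le (α i)) (mem_univ t.1)
    exact_mod_cast t.2.isLt.le.trans hαi
  unfold dysonForm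
  split_ifs <;> rw [abs_le] <;> constructor <;> linarith [Nat.cast_nonneg (α := ℝ) (t.2 : ℕ)]

lemma sum_linearFormProdCoeff_dysonForm_mul_pow {n : ℕ} {α β : Fin q → ℕ}
    (hα : ∑ i, α i = n) (hβ : ∑ i, β i = n) :
    ∑ γ ∈ Nat.antidiagonalTuple q n,
        linearFormProdCoeff (dysonForm n α) γ * ∏ k, (β k : ℝ) ^ γ k =
      (n : ℝ) ^ n * if α = β then ∏ i, ((α i).factorial : ℝ) else 0 := by
  have hexpand := prod_sum_mul_eq_sum_linearFormProdCoeff (dysonForm n α) (fun k => (β k : ℝ))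
  rw [show Fintype.card ((i : Fin q) × Fin (α i)) = n by simp [hα]] at hexpand
  rw [← hexpand, prod_sum_dysonForm_mul α hβ, hα,
    ← Nat.cast_prod, prod_descFactorial_eq_ite (hα.trans hβ.symm)]
  push_cast
  rfl

noncomputable def dysonInv (n q : ℕ) :
    Matrix ↥(Nat.antidiagonalTuple q n) ↥(Nat.antidiagonalTuple q n) ℝ :=
  fun γ α => linearFormProdCoeff (dysonForm n (α : Fin q → ℕ)) γ /
    (Nat.multinomial univ (γ : Fin q → ℕ) * ∏ i, (((α : Fin q → ℕ) i).factorial : ℝ))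

theorem dysonMatrix_mul_dysonInv (n q : ℕ) : dysonMatrix n q * dysonInv n q = 1 := by
  ext β α
  have hα := Nat.mem_antidiagonalTuple.mp α.2
  have hβ := Nat.mem_antidiagonalTuple.mp β.2
  have hfac : ∏ i, (((α : Fin q → ℕ) i).factorial : ℝ) ≠ 0 :=
    prod_ne_zero_iff.mpr fun i _ => Nat.cast_ne_zero.mpr (Nat.factorial_ne_zero _)
  have hpow : (n : ℝ) ^ n ≠ 0 := by exact_mod_cast Nat.pow_self_pos.ne'
  calc (dysonMatrix n q * dysonInv n q) β α
      = (∑ γ ∈ Nat.antidiagonalTuple q n, linearFormProdCoeff (dysonForm n (α : Fin q → ℕ)) γ *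
            ∏ k, ((β : Fin q → ℕ) k : ℝ) ^ γ k) /
          ((n : ℝ) ^ n * ∏ i, (((α : Fin q → ℕ) i).factorial : ℝ)) := by
        rw [Matrix.mul_apply, sum_div, ← sum_coe_sort (Nat.antidiagonalTuple q n)]
        refine sum_congr rfl fun γ _ => ?_
        have hmult : (Nat.multinomial univ (γ : Fin q → ℕ) : ℝ) ≠ 0 := by
          exact_mod_cast (Nat.multinomial_pos _ _).ne'
        rw [dysonMatrix, dysonInv]
        field_simp
    _ = (1 : Matrix _ _ ℝ) β α := by
        rw [sum_linearFormProdCoeff_dysonForm_mul_pow hα hβ, Matrix.one_apply]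
        by_cases hαβ : α = β
        · subst hαβ
          rw [if_pos rfl, if_pos rfl]
          exact div_self (mul_ne_zero hpow hfac)
        · rw [if_neg (Subtype.coe_injective.ne hαβ), if_neg (Ne.symm hαβ), mul_zero, zero_div]

lemma abs_linearFormProdCoeff_dysonForm_le {n : ℕ} {α : Fin q → ℕ} (hα : ∑ i, α i = n)
    (γ : Fin q → ℕ) : |linearFormProdCoeff (dysonForm n α) γ| ≤ ((q : ℝ) * n) ^ n :=
  calc |linearFormProdCoeff (dysonForm n α) γ| ≤ ∏ t, ∑ k, |dysonForm n α t k| :=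
        abs_linearFormProdCoeff_le _ _
    _ ≤ ∏ _t : (i : Fin q) × Fin (α i), ((q : ℝ) * n) :=
        prod_le_prod (fun _ _ => sum_nonneg fun _ _ => abs_nonneg _) fun t _ =>
          (sum_le_sum fun k _ => abs_dysonForm_le hα t k).trans_eq (by simp)
    _ = ((q : ℝ) * n) ^ n := by simp [hα]

lemma sum_abs_dysonInv_le (n q : ℕ) (γ : Nat.antidiagonalTuple q n) :
    ∑ α, |dysonInv n q γ α| ≤ #(Nat.antidiagonalTuple q n) * ((q : ℝ) * n) ^ n :=
  calc ∑ α, |dysonInv n q γ α| ≤ ∑ _α : Nat.antidiagonalTuple q n, ((q : ℝ) * n) ^ n := by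
        refine sum_le_sum fun α _ => ?_
        have hdenom : (1 : ℝ) ≤ Nat.multinomial univ (γ : Fin q → ℕ) *
            ∏ i, (((α : Fin q → ℕ) i).factorial : ℝ) := by
          exact_mod_cast Nat.mul_pos (Nat.multinomial_pos _ _)
            (prod_pos fun i _ => Nat.factorial_pos _)
        rw [dysonInv, abs_div, abs_of_pos (zero_lt_one.trans_le hdenom)]
        exact (div_le_self (abs_nonneg _) hdenom).trans
          (abs_linearFormProdCoeff_dysonForm_le (Nat.mem_antidiagonalTuple.mp α.2) _)
    _ = #(Nat.antidiagonalTuple q n) * ((q : ℝ) * n) ^ n := by simp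

end DysonInverse

theorem dysonMatrix_invertible_and_inv_bound_general (n q : ℕ) :
    ∃ Dinv : Matrix ↥(Finset.Nat.antidiagonalTuple q n)
        ↥(Finset.Nat.antidiagonalTuple q n) ℝ,
      dysonMatrix n q * Dinv = 1 ∧ Dinv * dysonMatrix n q = 1 ∧
      ∀ α, ∑ β, |Dinv α β| ≤
        ((Nat.factorial n : ℝ)) ^ 3 * ((Finset.Nat.antidiagonalTuple q n).card : ℝ) ^ 2
          * 2 ^ n := by
  refine ⟨dysonInv n q, dysonMatrix_mul_dysonInv n q,
    mul_eq_one_comm.mp (dysonMatrix_mul_dysonInv n q),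
    fun α => (sum_abs_dysonInv_le n q α).trans ?_⟩
  have hcount : #(Nat.antidiagonalTuple q n) * ((q : ℝ) * n) ^ n ≤
      (n.factorial : ℝ) ^ 3 * #(Nat.antidiagonalTuple q n) ^ 2 := by
    exact_mod_cast Nat.card_antidiagonalTuple_mul_pow_le q n
  exact hcount.trans (le_mul_of_one_le_right (by positivity) (one_le_pow₀ one_le_two))

/-- **Lemma A.3.** The Dyson matrix `D` is invertible and its inverse satisfies
`‖D⁻¹‖_∞ ≤ (n!)³ |P_{n,q}|² 2^n`, where `‖·‖_∞` is the maximum over rows of the sum of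
absolute values of the entries. -/
theorem dysonMatrix_invertible_and_inv_bound (n q : ℕ) (hn : 1 ≤ n) (hq : 1 ≤ q) :
    ∃ Dinv : Matrix ↥(Finset.Nat.antidiagonalTuple q n)
        ↥(Finset.Nat.antidiagonalTuple q n) ℝ,
      dysonMatrix n q * Dinv = 1 ∧ Dinv * dysonMatrix n q = 1 ∧
      ∀ α, ∑ β, |Dinv α β| ≤
        ((Nat.factorial n : ℝ)) ^ 3 * ((Finset.Nat.antidiagonalTuple q n).card : ℝ) ^ 2
          * 2 ^ n :=
  dysonMatrix_invertible_and_inv_bound_general n q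
end

section
/- Let d, s ∈ ℕ and 0 < δ < 1/d. Then for every function f that is s times continuously differentiable on [−δ, δ]^d, there exists a polynomial f̂ of degree at most s−1 such that for every k ∈ ℕ₀ with k < s, ‖f − f̂‖_{W^{k,∞}([−δ,δ]^d)} ≤ ((dδ)^{s−k} / (s−k)!) · |f|_{W^{s,∞}([−δ,δ]^d)}. -/
/-!
The approximant is the Taylor polynomial of `f` at `0` of degree `s - 1`. Differentiating it along
a list `L` of coordinate directions gives the Taylor polynomial of `D^L f` of degree
`s - 1 - |L|`; this needs the coefficients to be symmetric, i.e. the symmetry of mixed partials.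
So `D^α (f - f̂)` is the Taylor remainder of `D^α f`, which the Lagrange form of the remainder
along the segment `t ↦ t • x` bounds by `(∑ |x_i|)^m / m! · |f|_{W^{s,∞}}` with `m = s - |α|`.
On the cube `∑ |x_i| ≤ dδ < 1`, so the worst case is `m = s - k`.
-/

/-- Partial derivative in direction `i`. -/
noncomputable def pder {d : ℕ} (i : Fin d) (f : (Fin d → ℝ) → ℝ) : (Fin d → ℝ) → ℝ :=
  fun x => fderiv ℝ f x (Pi.single i 1)

/-- Multi-index partial derivative `D^α f`. -/
noncomputable def mder {d : ℕ} (α : Fin d → ℕ) (f : (Fin d → ℝ) → ℝ) : (Fin d → ℝ) → ℝ :=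
  (List.finRange d).foldl (fun g i => (pder i)^[α i] g) f

/-- `W^{k,∞}(S)` norm: `max_{|α| ≤ k} sup_{x ∈ S} |D^α f x|`. -/
noncomputable def sobNorm {d : ℕ} (k : ℕ) (S : Set (Fin d → ℝ)) (f : (Fin d → ℝ) → ℝ) : ℝ :=
  ⨆ p : {q : (Fin d → ℕ) × (Fin d → ℝ) // (∑ i, q.1 i) ≤ k ∧ q.2 ∈ S}, |mder p.1.1 f p.1.2|

/-- `W^{m,∞}(S)` seminorm: `max_{|α| = m} sup_{x ∈ S} |D^α f x|`. -/
noncomputable def sobSemi {d : ℕ} (m : ℕ) (S : Set (Fin d → ℝ)) (f : (Fin d → ℝ) → ℝ) : ℝ :=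
  ⨆ p : {q : (Fin d → ℕ) × (Fin d → ℝ) // (∑ i, q.1 i) = m ∧ q.2 ∈ S}, |mder p.1.1 f p.1.2|

/-- `p` is (the evaluation of) a polynomial on `ℝ^d` of total degree at most `s`. -/
def IsPolyDegLE {d : ℕ} (s : ℕ) (p : (Fin d → ℝ) → ℝ) : Prop :=
  ∃ P : MvPolynomial (Fin d) ℝ, P.totalDegree ≤ s ∧ ∀ x, p x = MvPolynomial.eval x P

open Set Filter Topology

section PartialDerivatives

variable {d : ℕ}

noncomputable def pderList (L : List (Fin d)) (f : (Fin d → ℝ) → ℝ) : (Fin d → ℝ) → ℝ :=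
  L.foldr pder f

@[simp] lemma pderList_nil (f : (Fin d → ℝ) → ℝ) : pderList [] f = f := rfl

@[simp] lemma pderList_cons (i : Fin d) (L : List (Fin d)) (f : (Fin d → ℝ) → ℝ) :
    pderList (i :: L) f = pder i (pderList L f) := rfl

lemma pderList_append (L₁ L₂ : List (Fin d)) (f : (Fin d → ℝ) → ℝ) :
    pderList (L₁ ++ L₂) f = pderList L₁ (pderList L₂ f) :=
  List.foldr_append

lemma pder_congr_of_eventuallyEq {i : Fin d} {g₁ g₂ : (Fin d → ℝ) → ℝ} {x : Fin d → ℝ}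
    (h : g₁ =ᶠ[𝓝 x] g₂) : pder i g₁ x = pder i g₂ x := by
  rw [pder, pder, h.fderiv_eq]

lemma pder_const (c : ℝ) (i : Fin d) : pder i (fun _ => c) = 0 := by
  funext x
  simp [pder]

lemma pder_finsetSum_const_mul {ι : Type*} (s : Finset ι) (c : ι → ℝ)
    {φ : ι → (Fin d → ℝ) → ℝ} {x : Fin d → ℝ} (hφ : ∀ j ∈ s, DifferentiableAt ℝ (φ j) x)
    (i : Fin d) : pder i (fun y => ∑ j ∈ s, c j * φ j y) x = ∑ j ∈ s, c j * pder i (φ j) x := by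
  rw [pder, fderiv_fun_sum fun j hj => (hφ j hj).const_mul (c j), sum_apply]
  refine Finset.sum_congr rfl fun j hj => ?_
  rw [fderiv_const_mul (hφ j hj)]
  rfl

variable {U : Set (Fin d → ℝ)}

lemma ContDiffOn.pder (hU : IsOpen U) {g : (Fin d → ℝ) → ℝ} {n : ℕ}
    (hg : ContDiffOn ℝ (n + 1 : ℕ) g U) (i : Fin d) : ContDiffOn ℝ n (pder i g) U :=
  (hg.fderiv_of_isOpen hU (by norm_cast)).clm_apply contDiffOn_const

lemma ContDiffOn.pderList (hU : IsOpen U) {g : (Fin d → ℝ) → ℝ} {n : ℕ} (L : List (Fin d))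
    (hg : ContDiffOn ℝ (n + L.length : ℕ) g U) : ContDiffOn ℝ n (pderList L g) U := by
  induction L generalizing n with
  | nil => simpa using hg
  | cons i L ih =>
    refine (ih ?_).pder hU i
    rwa [List.length_cons, ← add_assoc, Nat.add_right_comm] at hg

lemma pder_pder_eq_fderiv_fderiv {g : (Fin d → ℝ) → ℝ} {x : Fin d → ℝ}
    (hg : DifferentiableAt ℝ (fderiv ℝ g) x) (i j : Fin d) :
    pder i (pder j g) x = fderiv ℝ (fderiv ℝ g) x (Pi.single i 1) (Pi.single j 1) := by
  change fderiv ℝ (fun y => fderiv ℝ g y (Pi.single j 1)) x (Pi.single i 1) = _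
  simp [fderiv_clm_apply hg (differentiableAt_const _)]

lemma pder_comm (hU : IsOpen U) {g : (Fin d → ℝ) → ℝ} (hg : ContDiffOn ℝ 2 g U)
    {x : Fin d → ℝ} (hx : x ∈ U) (i j : Fin d) : pder i (pder j g) x = pder j (pder i g) x := by
  have hgx : ContDiffAt ℝ 2 g x := hg.contDiffAt (hU.mem_nhds hx)
  have hdiff : DifferentiableAt ℝ (fderiv ℝ g) x :=
    (hgx.fderiv_right (m := 1) (by norm_num)).differentiableAt one_ne_zero
  rw [pder_pder_eq_fderiv_fderiv hdiff, pder_pder_eq_fderiv_fderiv hdiff,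
    hgx.isSymmSndFDerivAt (by simp)]

lemma pderList_perm (hU : IsOpen U) {g : (Fin d → ℝ) → ℝ} {n : ℕ} (hg : ContDiffOn ℝ n g U)
    {L₁ L₂ : List (Fin d)} (hL : L₁.Perm L₂) (hlen : L₁.length ≤ n) :
    EqOn (pderList L₁ g) (pderList L₂ g) U := by
  induction hL with
  | nil => exact fun _ _ => rfl
  | cons i _ ih =>
    exact fun x hx => pder_congr_of_eventuallyEq
      (eventuallyEq_of_mem (hU.mem_nhds hx) (ih (by simp at hlen; omega)))
  | swap i j L =>
    have hL : ContDiffOn ℝ 2 (pderList L g) U :=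
      (hg.of_le (by simp at hlen; exact_mod_cast (by omega : 2 + L.length ≤ n))).pderList hU L
    exact fun x hx => pder_comm hU hL hx j i
  | trans h₁₂ _ ih₁₂ ih₂₃ =>
    exact fun x hx => (ih₁₂ hlen hx).trans (ih₂₃ (h₁₂.length_eq ▸ hlen) hx)

def multiIndexList (α : Fin d → ℕ) : List (Fin d) :=
  (List.finRange d).reverse.flatMap fun i => List.replicate (α i) i

lemma pderList_replicate (i : Fin d) (k : ℕ) (g : (Fin d → ℝ) → ℝ) :
    pderList (List.replicate k i) g = (pder i)^[k] g := by
  induction k with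
  | zero => rfl
  | succ k ih => rw [List.replicate_succ, pderList_cons, ih, Function.iterate_succ_apply']

lemma mder_eq_pderList (α : Fin d → ℕ) (g : (Fin d → ℝ) → ℝ) :
    mder α g = pderList (multiIndexList α) g := by
  suffices ∀ (l : List (Fin d)) (g : (Fin d → ℝ) → ℝ),
      l.foldl (fun g i => (pder i)^[α i] g) g
        = pderList (l.reverse.flatMap fun i => List.replicate (α i) i) g from this _ g
  intro l
  induction l with
  | nil => exact fun _ => rfl
  | cons i l ih =>
    intro g
    simp [ih, pderList_append, pderList_replicate]

lemma count_multiIndexList (α : Fin d → ℕ) (j : Fin d) : (multiIndexList α).count j = α j := by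
  simp [multiIndexList, List.count_flatMap, List.count_replicate, ← Fin.sum_univ_def]

lemma length_multiIndexList (α : Fin d → ℕ) : (multiIndexList α).length = ∑ i, α i := by
  simp [multiIndexList, List.length_flatMap, List.sum_reverse, ← Fin.sum_univ_def]

lemma perm_multiIndexList_count (L : List (Fin d)) :
    L.Perm (multiIndexList fun i => L.count i) :=
  List.perm_iff_count.2 fun j => (count_multiIndexList (fun i => L.count i) j).symm

lemma sum_count_eq_length (L : List (Fin d)) : ∑ i, L.count i = L.length := by
  rw [← length_multiIndexList, (perm_multiIndexList_count L).length_eq]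

lemma pderList_eq_mder_count (hU : IsOpen U) {g : (Fin d → ℝ) → ℝ} (L : List (Fin d))
    (hg : ContDiffOn ℝ L.length g U) : EqOn (pderList L g) (mder (fun i => L.count i) g) U := by
  rw [mder_eq_pderList]
  exact pderList_perm hU hg (perm_multiIndexList_count L) le_rfl

end PartialDerivatives

section HomogeneousForms

variable {d : ℕ}

noncomputable def homogForm (j : ℕ) (a : (Fin j → Fin d) → ℝ) (x : Fin d → ℝ) : ℝ :=
  ∑ p : Fin j → Fin d, (∏ r, x (p r)) * a p

lemma homogForm_zero (a : (Fin 0 → Fin d) → ℝ) : homogForm 0 a = fun _ => a default := by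
  funext x
  rw [homogForm, Fintype.sum_unique, Finset.univ_eq_empty, Finset.prod_empty, one_mul]

lemma homogForm_succ (j : ℕ) (a : (Fin (j + 1) → Fin d) → ℝ) (x : Fin d → ℝ) :
    homogForm (j + 1) a x = ∑ i, x i * homogForm j (fun q => a (Fin.cons i q)) x := by
  simp only [homogForm, Finset.mul_sum]
  rw [← (Fin.consEquiv fun _ => Fin d).sum_comp, Fintype.sum_prod_type]
  simp [Fin.consEquiv, Fin.prod_univ_succ, mul_assoc]

lemma contDiff_homogForm (j : ℕ) (a : (Fin j → Fin d) → ℝ) {n : WithTop ℕ∞} :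
    ContDiff ℝ n (homogForm j a) := by
  unfold homogForm
  fun_prop

lemma abs_homogForm_le {j : ℕ} {a : (Fin j → Fin d) → ℝ} {M : ℝ} (ha : ∀ p, |a p| ≤ M)
    (x : Fin d → ℝ) : |homogForm j a x| ≤ (∑ i, |x i|) ^ j * M := by
  calc |homogForm j a x| ≤ ∑ p : Fin j → Fin d, (∏ r, |x (p r)|) * M := by
        refine (Finset.abs_sum_le_sum_abs _ _).trans (Finset.sum_le_sum fun p _ => ?_)
        rw [abs_mul, Finset.abs_prod]
        exact mul_le_mul_of_nonneg_left (ha p) (by positivity)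
    _ = (∑ i, |x i|) ^ j * M := by
        rw [← Finset.sum_mul, Finset.sum_pow', Fintype.piFinset_univ]

lemma pder_homogForm_succ (j : ℕ) (a : (Fin (j + 1) → Fin d) → ℝ) (i : Fin d) (x : Fin d → ℝ) :
    pder i (homogForm (j + 1) a) x = homogForm j (fun q => a (Fin.cons i q)) x +
      ∑ i₀, x i₀ * pder i (homogForm j fun q => a (Fin.cons i₀ q)) x := by
  have hdiff : ∀ b : (Fin j → Fin d) → ℝ, Differentiable ℝ (homogForm j b) :=
    fun b => (contDiff_homogForm j b (n := 1)).differentiable one_ne_zero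
  set F : Fin d → (Fin d → ℝ) → ℝ := fun i₀ => homogForm j fun q => a (Fin.cons i₀ q)
  have hcoord : ∀ i₀, DifferentiableAt ℝ (fun y : Fin d → ℝ => y i₀) x := fun i₀ => by fun_prop
  have hterm : ∀ i₀, fderiv ℝ (fun y => y i₀ * F i₀ y) x (Pi.single i 1)
      = (Pi.single i 1 : Fin d → ℝ) i₀ * F i₀ x + x i₀ * pder i (F i₀) x := by
    intro i₀
    have hproj : fderiv ℝ (fun y : Fin d → ℝ => y i₀) x = ContinuousLinearMap.proj i₀ :=
      (ContinuousLinearMap.proj (R := ℝ) (φ := fun _ : Fin d => ℝ) i₀).fderiv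
    rw [fderiv_fun_mul (hcoord i₀) (hdiff _ x), hproj]
    simp [pder, F, add_comm, mul_comm]
  rw [pder, show homogForm (j + 1) a = fun y => ∑ i₀, y i₀ * F i₀ y from
      funext (homogForm_succ j a),
    fderiv_fun_sum (A := fun i₀ y => y i₀ * F i₀ y) fun i₀ _ => (hcoord i₀).mul (hdiff _ x)]
  simp [hterm, F, Finset.sum_add_distrib, Pi.single_apply]

lemma pder_homogForm_of_perm {j : ℕ} {a : (Fin (j + 1) → Fin d) → ℝ}
    (ha : ∀ p q, (List.ofFn p).Perm (List.ofFn q) → a p = a q) (i : Fin d) (x : Fin d → ℝ) :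
    pder i (homogForm (j + 1) a) x = (j + 1) * homogForm j (fun q => a (Fin.cons i q)) x := by
  induction j with
  | zero => simp [pder_homogForm_succ, homogForm_zero, pder_const]
  | succ j ih =>
    have hswap : ∀ i₀ (q : Fin j → Fin d),
        a (Fin.cons i₀ (Fin.cons i q)) = a (Fin.cons i (Fin.cons i₀ q)) :=
      fun i₀ q => ha _ _ (by simpa only [List.ofFn_cons] using List.Perm.swap i i₀ _)
    have hcons : ∀ i₀, pder i (homogForm (j + 1) fun q => a (Fin.cons i₀ q)) x
        = (j + 1) * homogForm j (fun q => a (Fin.cons i (Fin.cons i₀ q))) x := by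
      intro i₀
      rw [ih fun p q hpq => ha _ _ (by simpa only [List.ofFn_cons] using hpq.cons i₀)]
      simp only [hswap]
    rw [pder_homogForm_succ, homogForm_succ j, Finset.mul_sum, ← Finset.sum_add_distrib]
    refine Finset.sum_congr rfl fun i₀ _ => ?_
    rw [hcons]
    push_cast
    ring

end HomogeneousForms

section TaylorPolynomial

variable {d : ℕ}

-- Ordered tuples `p` count each monomial `x^α` exactly `j! / α!` times, hence the factor `1 / j!`.
noncomputable def taylorPoly (n : ℕ) (g : (Fin d → ℝ) → ℝ) (x : Fin d → ℝ) : ℝ :=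
  ∑ j ∈ Finset.range n, (j.factorial : ℝ)⁻¹ * homogForm j (fun p => pderList (List.ofFn p) g 0) x

lemma isPolyDegLE_taylorPoly (n : ℕ) (g : (Fin d → ℝ) → ℝ) :
    IsPolyDegLE (n - 1) (taylorPoly n g) := by
  classical
  refine ⟨∑ j ∈ Finset.range n, ∑ p : Fin j → Fin d,
    MvPolynomial.C ((j.factorial : ℝ)⁻¹ * pderList (List.ofFn p) g 0) *
      ∏ r, MvPolynomial.X (p r), ?_, fun x => ?_⟩
  · refine (MvPolynomial.totalDegree_finsetSum _ _).trans (Finset.sup_le fun j hj => ?_)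
    refine (MvPolynomial.totalDegree_finsetSum _ _).trans (Finset.sup_le fun p _ => ?_)
    refine (MvPolynomial.totalDegree_mul _ _).trans ?_
    rw [MvPolynomial.totalDegree_C, zero_add]
    refine (MvPolynomial.totalDegree_finsetProd _ _).trans ?_
    simp only [MvPolynomial.totalDegree_X, Finset.sum_const, Finset.card_univ, Fintype.card_fin,
      smul_eq_mul, mul_one]
    have := Finset.mem_range.1 hj
    omega
  · simp only [taylorPoly, homogForm, map_sum, map_mul, MvPolynomial.eval_C, map_prod,
      MvPolynomial.eval_X, Finset.mul_sum]
    exact Finset.sum_congr rfl fun j _ => Finset.sum_congr rfl fun p _ => by ring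

lemma contDiff_taylorPoly (n : ℕ) (g : (Fin d → ℝ) → ℝ) {m : WithTop ℕ∞} :
    ContDiff ℝ m (taylorPoly n g) := by
  unfold taylorPoly
  have := fun j => contDiff_homogForm (n := m) j (fun p => pderList (List.ofFn p) g 0)
  fun_prop

variable {U : Set (Fin d → ℝ)}

lemma pder_taylorPoly (hU : IsOpen U) (h0 : 0 ∈ U) {n : ℕ} {g : (Fin d → ℝ) → ℝ}
    (hg : ContDiffOn ℝ (n + 1 : ℕ) g U) (i : Fin d) :
    pder i (taylorPoly (n + 1) g) = taylorPoly n (pder i g) := by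
  funext x
  have hperm : ∀ {L₁ L₂ : List (Fin d)}, L₁.Perm L₂ → L₁.length ≤ n + 1 →
      pderList L₁ g 0 = pderList L₂ g 0 :=
    fun hL hlen => pderList_perm hU hg hL hlen h0
  unfold taylorPoly
  rw [pder_finsetSum_const_mul _ _
    (fun j _ => (contDiff_homogForm (n := 1) j _).differentiable one_ne_zero x),
    Finset.sum_range_succ', homogForm_zero, pder_const, Pi.zero_apply, mul_zero, add_zero]
  refine Finset.sum_congr rfl fun j hj => ?_
  have hj : j + 1 ≤ n := Finset.mem_range.1 hj
  rw [pder_homogForm_of_perm fun p q hpq => hperm hpq (by simp; omega)]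
  have hcoeff : ∀ q : Fin j → Fin d,
      pderList (List.ofFn (Fin.cons i q : Fin (j + 1) → Fin d)) g 0
        = pderList (List.ofFn q) (pder i g) 0 := by
    intro q
    rw [List.ofFn_cons, hperm (List.perm_append_singleton i _).symm (by simp; omega),
      pderList_append]
    rfl
  simp only [hcoeff, Nat.factorial_succ, Nat.cast_mul]
  field_simp
  push_cast
  ring

lemma pderList_taylorPoly (hU : IsOpen U) (h0 : 0 ∈ U) {n : ℕ} {g : (Fin d → ℝ) → ℝ}
    (L : List (Fin d)) (hg : ContDiffOn ℝ (n + L.length : ℕ) g U) :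
    pderList L (taylorPoly (n + L.length) g) = taylorPoly n (pderList L g) := by
  induction L generalizing n with
  | nil => rfl
  | cons i L ih =>
    have hg' : ContDiffOn ℝ (n + 1 + L.length : ℕ) g U := by
      rwa [List.length_cons, ← add_assoc, Nat.add_right_comm] at hg
    rw [pderList_cons, List.length_cons, ← add_assoc, Nat.add_right_comm, ih hg',
      pder_taylorPoly hU h0 (hg'.pderList hU L) i, pderList_cons]

end TaylorPolynomial

section TaylorAlongSegment

variable {d : ℕ} {U : Set (Fin d → ℝ)}

lemma fderiv_apply_eq_sum_pder (ψ : (Fin d → ℝ) → ℝ) (y v : Fin d → ℝ) :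
    fderiv ℝ ψ y v = ∑ i, v i * pder i ψ y := by
  conv_lhs => rw [← Finset.univ_sum_single v]
  rw [map_sum]
  refine Finset.sum_congr rfl fun i _ => ?_
  rw [pder, ← smul_eq_mul, ← map_smul, ← Pi.single_smul', smul_eq_mul, mul_one]

lemma hasDerivAt_comp_smul_right {ψ : (Fin d → ℝ) → ℝ} {x : Fin d → ℝ} {t : ℝ}
    (hψ : DifferentiableAt ℝ ψ (t • x)) :
    HasDerivAt (fun t => ψ (t • x)) (∑ i, x i * pder i ψ (t • x)) t := by
  rw [← fderiv_apply_eq_sum_pder]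
  exact hψ.hasFDerivAt.comp_hasDerivAt t (by simpa using (hasDerivAt_id t).smul_const x)

lemma iteratedDeriv_comp_smul_right (hU : IsOpen U) {n : ℕ} {g : (Fin d → ℝ) → ℝ}
    (hg : ContDiffOn ℝ n g U) (x : Fin d → ℝ) {j : ℕ} (hj : j ≤ n) {t : ℝ} (ht : t • x ∈ U) :
    iteratedDeriv j (fun t => g (t • x)) t
      = homogForm j (fun p => pderList (List.ofFn p) g (t • x)) x := by
  induction j generalizing t with
  | zero => simp [homogForm_zero]
  | succ j ih =>
    have hV : IsOpen ((fun t : ℝ => t • x) ⁻¹' U) := hU.preimage (by fun_prop)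
    have hlocal : iteratedDeriv j (fun t => g (t • x)) =ᶠ[𝓝 t]
        fun t' => homogForm j (fun p => pderList (List.ofFn p) g (t' • x)) x :=
      eventuallyEq_of_mem (hV.mem_nhds ht) fun t' ht' => ih (by omega) ht'
    have hderiv : HasDerivAt
        (fun t' => homogForm j (fun p => pderList (List.ofFn p) g (t' • x)) x)
        (∑ p : Fin j → Fin d, (∏ r, x (p r)) *
          ∑ i, x i * pderList (i :: List.ofFn p) g (t • x)) t := by
      refine HasDerivAt.fun_sum fun p _ => (hasDerivAt_comp_smul_right ?_).const_mul _
      have hC1 : ContDiffOn ℝ (1 : ℕ) (pderList (List.ofFn p) g) U :=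
        (hg.of_le (by simp; exact_mod_cast (by omega : 1 + j ≤ n))).pderList hU _
      exact (hC1.differentiableOn one_ne_zero).differentiableAt (hU.mem_nhds ht)
    rw [iteratedDeriv_succ, hlocal.deriv_eq, hderiv.deriv, homogForm_succ]
    simp only [homogForm, List.ofFn_cons, pderList_cons, Finset.mul_sum]
    rw [Finset.sum_comm]
    exact Finset.sum_congr rfl fun i _ => Finset.sum_congr rfl fun p _ => by ring

lemma abs_sub_taylorPoly_le (hU : IsOpen U) {n : ℕ} {g : (Fin d → ℝ) → ℝ}
    (hg : ContDiffOn ℝ (n + 1 : ℕ) g U) {x : Fin d → ℝ} (hx : ∀ t ∈ Icc (0 : ℝ) 1, t • x ∈ U)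
    {M : ℝ} (hM : ∀ p : Fin (n + 1) → Fin d, ∀ t ∈ Icc (0 : ℝ) 1,
      |pderList (List.ofFn p) g (t • x)| ≤ M) :
    |g x - taylorPoly (n + 1) g x| ≤ (∑ i, |x i|) ^ (n + 1) / (n + 1).factorial * M := by
  set V := (fun t : ℝ => t • x) ⁻¹' U
  have hV : IsOpen V := hU.preimage (by fun_prop)
  have hgV : ContDiffOn ℝ (n + 1 : ℕ) (fun t => g (t • x)) V :=
    hg.comp (by fun_prop) fun _ ht => ht
  have hI : uIcc (0 : ℝ) 1 = Icc 0 1 := uIcc_of_le zero_le_one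
  obtain ⟨t, ht, hrem⟩ := taylor_mean_remainder_lagrange_iteratedDeriv zero_ne_one
    (hgV.mono (hI ▸ hx))
  have htaylor :
      taylorWithinEval (fun t => g (t • x)) n (uIcc 0 1) 0 1 = taylorPoly (n + 1) g x := by
    rw [taylor_within_apply, taylorPoly]
    refine Finset.sum_congr rfl fun j hj => ?_
    have hjn : j ≤ n + 1 := by have := Finset.mem_range.1 hj; omega
    have h0 : (0 : ℝ) ∈ V := by simpa [V] using hx 0 (by simp)
    rw [iteratedDerivWithin_eq_iteratedDeriv (uniqueDiffOn_uIcc zero_ne_one)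
      ((hgV.of_le (by exact_mod_cast hjn)).contDiffAt (hV.mem_nhds h0)) (by simp),
      iteratedDeriv_comp_smul_right hU hg x hjn h0]
    simp
  have htI : t ∈ Icc (0 : ℝ) 1 := Ioo_subset_Icc_self (by simpa [uIoo_of_le] using ht)
  rw [one_smul, htaylor, iteratedDeriv_comp_smul_right hU hg x le_rfl (hx t htI)] at hrem
  rw [hrem, sub_zero, one_pow, mul_one, abs_div, Nat.abs_cast, div_mul_eq_mul_div]
  gcongr
  exact abs_homogForm_le (fun p => hM p t htI) x

end TaylorAlongSegment

section RemainderEstimate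

variable {d : ℕ} {U : Set (Fin d → ℝ)}

lemma pderList_sub (hU : IsOpen U) {n : ℕ} {u v : (Fin d → ℝ) → ℝ} (hu : ContDiffOn ℝ n u U)
    (hv : ContDiffOn ℝ n v U) {L : List (Fin d)} (hL : L.length ≤ n) :
    EqOn (pderList L fun y => u y - v y) (fun y => pderList L u y - pderList L v y) U := by
  induction L with
  | nil => exact fun _ _ => rfl
  | cons i L ih =>
    intro x hx
    have hC1 : ∀ w : (Fin d → ℝ) → ℝ, ContDiffOn ℝ n w U →
        DifferentiableAt ℝ (pderList L w) x := fun w hw =>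
      (((hw.of_le (by simp at hL; exact_mod_cast (by omega : 1 + L.length ≤ n))).pderList hU L)
        |>.differentiableOn one_ne_zero).differentiableAt (hU.mem_nhds hx)
    rw [pderList_cons, pder_congr_of_eventuallyEq
      (eventuallyEq_of_mem (hU.mem_nhds hx) (ih (by simp at hL; omega))), pder,
      fderiv_fun_sub (hC1 u hu) (hC1 v hv)]
    rfl

lemma abs_mder_sub_taylorPoly_le (hU : IsOpen U) {s : ℕ} {f : (Fin d → ℝ) → ℝ}
    (hf : ContDiffOn ℝ s f U) {K : Set (Fin d → ℝ)} (hKU : K ⊆ U) (hK : StarConvex ℝ 0 K)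
    {M : ℝ} (hM : ∀ β y, ∑ i, β i = s → y ∈ K → |mder β f y| ≤ M)
    {α : Fin d → ℕ} (hα : ∑ i, α i < s) {x : Fin d → ℝ} (hx : x ∈ K) :
    |mder α (fun y => f y - taylorPoly s f y) x|
      ≤ (∑ i, |x i|) ^ (s - ∑ i, α i) / (s - ∑ i, α i).factorial * M := by
  obtain ⟨n, hn⟩ : ∃ n, s - ∑ i, α i = n + 1 := ⟨s - ∑ i, α i - 1, by omega⟩
  set L := multiIndexList α
  have hL : L.length = ∑ i, α i := length_multiIndexList α
  rw [← hL] at hα hn ⊢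
  obtain rfl : s = n + 1 + L.length := by omega
  have h0 : (0 : Fin d → ℝ) ∈ U := hKU (by simpa using hK.smul_mem hx le_rfl zero_le_one)
  have hseg : ∀ t ∈ Icc (0 : ℝ) 1, t • x ∈ K := fun t ht => hK.smul_mem hx ht.1 ht.2
  rw [hn, mder_eq_pderList,
    pderList_sub hU hf (contDiff_taylorPoly _ _).contDiffOn le_add_self (hKU hx),
    pderList_taylorPoly hU h0 L hf]
  refine abs_sub_taylorPoly_le hU (hf.pderList hU L) (fun t ht => hKU (hseg t ht))
    fun p t ht => ?_
  have hlen : (List.ofFn p ++ L).length = n + 1 + L.length := by simp; omega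
  rw [← pderList_append, pderList_eq_mder_count hU _ (hlen ▸ hf) (hKU (hseg t ht))]
  exact hM _ _ (by rw [sum_count_eq_length, hlen]) (hseg t ht)

end RemainderEstimate

section SobolevBounds

variable {d : ℕ}

lemma sobSemi_nonneg (m : ℕ) (S : Set (Fin d → ℝ)) (f : (Fin d → ℝ) → ℝ) : 0 ≤ sobSemi m S f :=
  Real.iSup_nonneg fun _ => abs_nonneg _

lemma sobNorm_le {k : ℕ} {S : Set (Fin d → ℝ)} {f : (Fin d → ℝ) → ℝ} {C : ℝ} (hC : 0 ≤ C)
    (h : ∀ α x, ∑ i, α i ≤ k → x ∈ S → |mder α f x| ≤ C) : sobNorm k S f ≤ C :=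
  Real.iSup_le (fun p => h _ _ p.2.1 p.2.2) hC

lemma abs_mder_le_sobSemi {U K : Set (Fin d → ℝ)} (hU : IsOpen U) (hK : IsCompact K)
    (hKU : K ⊆ U) {m : ℕ} {f : (Fin d → ℝ) → ℝ} (hf : ContDiffOn ℝ m f U) {β : Fin d → ℕ}
    (hβ : ∑ i, β i = m) {y : Fin d → ℝ} (hy : y ∈ K) : |mder β f y| ≤ sobSemi m K f := by
  have hbdd : ∀ β : Fin d → ℕ, ∑ i, β i = m → BddAbove ((fun y => |mder β f y|) '' K) := by
    intro β hβ
    have hcont : ContinuousOn (mder β f) U := by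
      rw [mder_eq_pderList]
      refine ((ContDiffOn.pderList (n := 0) hU _ ?_).continuousOn)
      rwa [zero_add, length_multiIndexList, hβ]
    exact (hK.image_of_continuousOn (continuous_abs.comp_continuousOn (hcont.mono hKU))).bddAbove
  refine le_ciSup (f := fun p : {q : (Fin d → ℕ) × (Fin d → ℝ) // ∑ i, q.1 i = m ∧ q.2 ∈ K} =>
    |mder p.1.1 f p.1.2|) ?_ ⟨(β, y), hβ, hy⟩
  refine ((Finset.Nat.antidiagonalTuple d m).finite_toSet.bddAbove_biUnion.2
    fun β hβ => hbdd β (Finset.Nat.mem_antidiagonalTuple.1 hβ)).mono ?_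
  rintro _ ⟨⟨⟨β, y⟩, hβ, hy⟩, rfl⟩
  exact mem_biUnion (Finset.Nat.mem_antidiagonalTuple.2 hβ) ⟨y, hy, rfl⟩

end SobolevBounds

lemma pow_div_factorial_le_pow_div_factorial {a b : ℝ} (ha : 0 ≤ a) (hab : a ≤ b) (hb : b ≤ 1)
    {k m : ℕ} (hkm : k ≤ m) : a ^ m / m.factorial ≤ b ^ k / k.factorial :=
  calc a ^ m / m.factorial ≤ b ^ k / m.factorial := by
        gcongr
        exact (pow_le_pow_left₀ ha hab m).trans (pow_le_pow_of_le_one (ha.trans hab) hb hkm)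
    _ ≤ b ^ k / k.factorial := by
        gcongr
        exact pow_nonneg (ha.trans hab) k

lemma sum_abs_le_of_mem_Icc {d : ℕ} {δ : ℝ} {x : Fin d → ℝ}
    (hx : x ∈ Icc (fun _ => -δ) (fun _ => δ)) : ∑ i, |x i| ≤ d * δ := by
  calc ∑ i, |x i| ≤ ∑ _i : Fin d, δ := Finset.sum_le_sum fun i _ => abs_le.2 ⟨hx.1 i, hx.2 i⟩
    _ = d * δ := by simp

theorem taylor_poly_approx_general (d s : ℕ)
    (δ : ℝ) (hδ0 : 0 < δ) (hδ : δ < 1 / d)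
    (f : (Fin d → ℝ) → ℝ)
    (hf : ∃ U, IsOpen U ∧ Set.Icc (fun _ => -δ) (fun _ => δ) ⊆ U ∧ ContDiffOn ℝ s f U) :
    ∃ fhat : (Fin d → ℝ) → ℝ, IsPolyDegLE (s - 1) fhat ∧
      ∀ k : ℕ, k < s →
        sobNorm k (Set.Icc (fun _ => -δ) (fun _ => δ)) (fun x => f x - fhat x) ≤
          ((d : ℝ) * δ) ^ (s - k) / (Nat.factorial (s - k)) *
            sobSemi s (Set.Icc (fun _ => -δ) (fun _ => δ)) f := by
  obtain ⟨U, hU, hKU, hfU⟩ := hf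
  have hd : (0 : ℝ) < d := one_div_pos.1 (hδ0.trans hδ)
  have hdδ : (d : ℝ) * δ ≤ 1 := by rw [lt_div_iff₀ hd] at hδ; linarith
  have hK : StarConvex ℝ 0 (Icc (fun _ : Fin d => -δ) fun _ => δ) :=
    (convex_Icc _ _).starConvex ⟨fun _ => by simp [hδ0.le], fun _ => hδ0.le⟩
  have hM := sobSemi_nonneg s (Icc (fun _ : Fin d => -δ) fun _ => δ) f
  refine ⟨taylorPoly s f, isPolyDegLE_taylorPoly s f, fun k hk =>
    sobNorm_le (by positivity) fun α x hα hx => ?_⟩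
  refine (abs_mder_sub_taylorPoly_le hU hfU hKU hK
    (fun β y hβ hy => abs_mder_le_sobSemi hU isCompact_Icc hKU hfU hβ hy) (by omega) hx).trans ?_
  exact mul_le_mul_of_nonneg_right (pow_div_factorial_le_pow_div_factorial (by positivity)
    (sum_abs_le_of_mem_Icc hx) hdδ (by omega)) hM

/-- **Lemma A.9 (Taylor's theorem).** For `d, s ≥ 1`, `0 < δ < 1/d` and `f` that is `s` times
continuously differentiable on (a neighborhood of) `[-δ, δ]^d`, there is a polynomial `f̂` of
degree at most `s-1` such that for all `k < s`,
`‖f - f̂‖_{W^{k,∞}([-δ,δ]^d)} ≤ (dδ)^{s-k}/(s-k)! · |f|_{W^{s,∞}([-δ,δ]^d)}`. -/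
theorem taylor_poly_approx (d s : ℕ) (hd : 1 ≤ d) (hs : 1 ≤ s)
    (δ : ℝ) (hδ0 : 0 < δ) (hδ : δ < 1 / d)
    (f : (Fin d → ℝ) → ℝ)
    (hf : ∃ U, IsOpen U ∧ Set.Icc (fun _ => -δ) (fun _ => δ) ⊆ U ∧ ContDiffOn ℝ s f U) :
    ∃ fhat : (Fin d → ℝ) → ℝ, IsPolyDegLE (s - 1) fhat ∧
      ∀ k : ℕ, k < s →
        sobNorm k (Set.Icc (fun _ => -δ) (fun _ => δ)) (fun x => f x - fhat x) ≤
          ((d : ℝ) * δ) ^ (s - k) / (Nat.factorial (s - k)) *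
            sobSemi s (Set.Icc (fun _ => -δ) (fun _ => δ)) f :=
  taylor_poly_approx_general d s δ hδ0 hδ f hf
end

section
/- Let d ∈ ℕ, k ∈ ℕ₀ and M > 0. Then for every ε > 0 there exists a shallow tanh neural network ×̂ : [−M, M]^d → ℝ of width 3⌈(d+1)/2⌉ |P_{d,d}| such that ‖×̂(x) − ∏_{i=1}^d x_i‖_{W^{k,∞}([−M,M]^d)} ≤ ε, where P_{d,d} = {α ∈ ℕ₀^d : |α| = d}. -/
/-- A shallow tanh neural network of width `m` from `ℝ^p` to `ℝ`. -/
def IsShallowTanhScalar {p : ℕ} (m : ℕ) (Ψ : (Fin p → ℝ) → ℝ) : Prop :=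
  ∃ (W₁ : Matrix (Fin m) (Fin p) ℝ) (b₁ : Fin m → ℝ) (W₂ : Fin m → ℝ) (b₂ : ℝ),
    ∀ x, Ψ x = (∑ i, W₂ i * Real.tanh ((∑ l, W₁ i l * x l) + b₁ i)) + b₂


section Aux

open Polynomial in
noncomputable def tanhPoly : ℕ → Polynomial ℝ
  | 0 => Polynomial.X
  | (n+1) => (1 - Polynomial.X ^ 2) * (tanhPoly n).derivative

/-- `n`-th derivative of `tanh`. -/
noncomputable def Tder (n : ℕ) (t : ℝ) : ℝ := (tanhPoly n).eval (Real.tanh t)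

lemma tanh_hasDerivAt (x : ℝ) : HasDerivAt Real.tanh (1 - Real.tanh x ^ 2) x := by
  have h := (Real.hasDerivAt_sinh x).div (Real.hasDerivAt_cosh x) (Real.cosh_pos x).ne'
  have e : Real.tanh = fun y => Real.sinh y / Real.cosh y := by
    funext y; exact Real.tanh_eq_sinh_div_cosh y
  rw [e]
  refine h.congr_deriv ?_
  have hc := (Real.cosh_pos x).ne'
  have hsq : Real.cosh x ^ 2 - Real.sinh x ^ 2 = 1 := Real.cosh_sq_sub_sinh_sq x
  field_simp

lemma abs_tanh_le_one (x : ℝ) : |Real.tanh x| ≤ 1 := by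
  rw [Real.tanh_eq_sinh_div_cosh, abs_div, abs_of_pos (Real.cosh_pos x),
    div_le_one (Real.cosh_pos x), abs_le]
  constructor
  · nlinarith [Real.sinh_add_cosh x, Real.exp_pos x]
  · nlinarith [Real.cosh_sub_sinh x, Real.exp_pos (-x)]

lemma tanh_injective : Function.Injective Real.tanh := by
  intro a b hab
  rw [Real.tanh_eq_sinh_div_cosh, Real.tanh_eq_sinh_div_cosh,
    div_eq_div_iff (Real.cosh_pos a).ne' (Real.cosh_pos b).ne'] at hab
  have : Real.sinh (a - b) = 0 := by rw [Real.sinh_sub]; nlinarith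
  have h2 := Real.sinh_eq_zero.mp this
  linarith

lemma Tder_hasDerivAt (n : ℕ) (t : ℝ) : HasDerivAt (Tder n) (Tder (n+1) t) t := by
  have h1 := ((tanhPoly n).hasDerivAt (Real.tanh t)).comp t (tanh_hasDerivAt t)
  refine h1.congr_deriv ?_
  simp only [Tder, tanhPoly, Polynomial.eval_mul, Polynomial.eval_sub, Polynomial.eval_one,
    Polynomial.eval_pow, Polynomial.eval_X]
  ring

open Polynomial

lemma tanhPoly_natDegree_le (n : ℕ) : (tanhPoly n).natDegree ≤ n + 1 := by
  induction n with
  | zero => simpa [tanhPoly] using Polynomial.natDegree_X_le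
  | succ n ih =>
      calc (tanhPoly (n+1)).natDegree
          ≤ (1 - Polynomial.X ^ 2 : ℝ[X]).natDegree + (tanhPoly n).derivative.natDegree :=
            Polynomial.natDegree_mul_le
        _ ≤ 2 + ((tanhPoly n).natDegree - 1) := by
            gcongr
            · exact (Polynomial.natDegree_sub_le _ _).trans (by simp)
            · exact Polynomial.natDegree_derivative_le _
        _ ≤ n + 2 := by omega

lemma tanhPoly_coeff_top (n : ℕ) :
    (tanhPoly n).coeff (n+1) = (-1 : ℝ)^n * n.factorial := by
  induction n with
  | zero => simp [tanhPoly]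
  | succ n ih =>
      have hD : (tanhPoly (n+1)) = (tanhPoly n).derivative - Polynomial.X ^ 2 * (tanhPoly n).derivative := by
        rw [tanhPoly]; ring
      rw [hD, Polynomial.coeff_sub]
      have h1 : ((tanhPoly n).derivative).coeff (n+2) = 0 := by
        apply Polynomial.coeff_eq_zero_of_natDegree_lt
        have := (Polynomial.natDegree_derivative_le (tanhPoly n)).trans
          (Nat.sub_le_sub_right (tanhPoly_natDegree_le n) 1)
        omega
      have h2 : (Polynomial.X ^ 2 * (tanhPoly n).derivative).coeff (n+2)
          = ((tanhPoly n).derivative).coeff n := by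
        simpa using Polynomial.coeff_X_pow_mul ((tanhPoly n).derivative) 2 n
      rw [h1, h2, Polynomial.coeff_derivative, ih]
      push_cast
      rw [Nat.factorial_succ]
      push_cast
      ring

lemma tanhPoly_ne_zero (n : ℕ) : tanhPoly n ≠ 0 := by
  intro h
  have h2 := tanhPoly_coeff_top n
  rw [h, Polynomial.coeff_zero] at h2
  have h3 : (n.factorial : ℝ) ≠ 0 := Nat.cast_ne_zero.mpr (Nat.factorial_ne_zero n)
  exact (mul_ne_zero (pow_ne_zero n (by norm_num : (-1:ℝ) ≠ 0)) h3) h2.symm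

lemma exists_Tder_ne_zero (n : ℕ) : ∃ θ : ℝ, Tder n θ ≠ 0 := by
  by_contra hcon
  push_neg at hcon
  have hroots : {y : ℝ | (tanhPoly n).IsRoot y}.Infinite := by
    apply Set.Infinite.mono (s := Set.range Real.tanh)
    · rintro y ⟨t, rfl⟩; exact hcon t
    · exact Set.infinite_range_of_injective tanh_injective
  exact tanhPoly_ne_zero n (Polynomial.eq_zero_of_infinite_isRoot _ hroots)

noncomputable def Bnd (n : ℕ) : ℝ :=
  ∑ i ∈ Finset.range ((tanhPoly n).natDegree + 1), |(tanhPoly n).coeff i|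

lemma Bnd_nonneg (n : ℕ) : 0 ≤ Bnd n :=
  Finset.sum_nonneg fun _ _ => abs_nonneg _

lemma abs_Tder_le (n : ℕ) (t : ℝ) : |Tder n t| ≤ Bnd n := by
  rw [Tder, Polynomial.eval_eq_sum_range]
  refine (Finset.abs_sum_le_sum_abs _ _).trans ?_
  apply Finset.sum_le_sum
  intro i _
  rw [abs_mul]
  calc |(tanhPoly n).coeff i| * |Real.tanh t ^ i|
      ≤ |(tanhPoly n).coeff i| * 1 := by
        apply mul_le_mul_of_nonneg_left _ (abs_nonneg _)
        rw [abs_pow]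
        exact pow_le_one₀ (abs_nonneg _) (abs_tanh_le_one t)
    _ = _ := mul_one _


lemma mvt_compare {g g' : ℝ → ℝ} {K H : ℝ} {m : ℕ} (hK : 0 ≤ K)
    (hg : ∀ t, HasDerivAt g (g' t) t) (h0 : g 0 = 0)
    (hb : ∀ t ∈ Set.Icc (0:ℝ) H, |g' t| ≤ K * t ^ m) :
    ∀ t ∈ Set.Icc (0:ℝ) H, |g t| ≤ K * t ^ (m+1) := by
  intro t ht
  obtain ⟨ht0, htH⟩ := ht
  have h0mem : (0:ℝ) ∈ Set.Icc (0:ℝ) H := ⟨le_refl _, le_trans ht0 htH⟩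
  have key : ∀ s : ℝ, s = 1 ∨ s = -1 → K * t ^ (m+1) + s * g t ≥ 0 := by
    intro s hs
    have mono : MonotoneOn (fun u => K * u ^ (m+1) + s * g u) (Set.Icc (0:ℝ) H) := by
      apply monotoneOn_of_deriv_nonneg (convex_Icc _ _)
      · apply Continuous.continuousOn
        have hgc : Continuous g := by
          have : Differentiable ℝ g := fun u => (hg u).differentiableAt
          exact this.continuous
        continuity
      · intro u hu
        apply DifferentiableAt.differentiableWithinAt
        exact (((hasDerivAt_pow (m+1) u).const_mul K).add ((hg u).const_mul s)).differentiableAt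
      · intro u hu
        rw [interior_Icc] at hu
        have hder : HasDerivAt (fun u => K * u ^ (m+1) + s * g u)
            (K * (((m:ℝ)+1) * u ^ m) + s * g' u) u := by
          have := ((hasDerivAt_pow (m+1) u).const_mul K).add ((hg u).const_mul s)
          refine this.congr_deriv ?_
          simp
        rw [hder.deriv]
        have hbu := hb u ⟨le_of_lt hu.1, le_of_lt hu.2⟩
        have hsb : s * g' u ≥ -(K * u ^ m) := by
          rcases hs with rfl | rfl
          · have := abs_le.mp hbu; linarith [this.1]
          · have := abs_le.mp hbu; linarith [this.2]
        have : K * u ^ m ≤ K * (((m:ℝ)+1) * u ^ m) := by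
          have hu0 : (0:ℝ) ≤ u ^ m := pow_nonneg (le_of_lt hu.1) m
          have hm0 : (0:ℝ) ≤ (m:ℝ) := Nat.cast_nonneg m
          nlinarith [mul_nonneg hK hu0]
        linarith
    have := mono h0mem ⟨ht0, htH⟩ ht0
    simpa [h0] using this
  have k1 := key 1 (Or.inl rfl)
  have k2 := key (-1) (Or.inr rfl)
  rw [abs_le]
  constructor <;> nlinarith

lemma taylor_bound {K H : ℝ} (hK : 0 ≤ K) :
    ∀ (m : ℕ) (G : ℕ → ℝ → ℝ),
      (∀ j t, HasDerivAt (G j) (G (j+1) t) t) →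
      (∀ j ≤ m, G j 0 = 0) →
      (∀ t ∈ Set.Icc (0:ℝ) H, |G (m+1) t| ≤ K) →
      ∀ t ∈ Set.Icc (0:ℝ) H, |G 0 t| ≤ K * t ^ (m+1) := by
  intro m
  induction m with
  | zero =>
      intro G hchain h0 hb
      apply mvt_compare hK (hchain 0) (h0 0 le_rfl)
      intro t ht; simpa using hb t ht
  | succ m ih =>
      intro G hchain h0 hb
      have h1 : ∀ t ∈ Set.Icc (0:ℝ) H, |G 1 t| ≤ K * t ^ (m+1) := by
        apply ih (fun j => G (j+1)) (fun j t => hchain (j+1) t)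
        · intro j hj; exact h0 (j+1) (by omega)
        · exact hb
      exact mvt_compare hK (hchain 0) (h0 0 (by omega)) h1


lemma binom_diff (D a : ℝ) (m : ℕ) :
    (D + a)^m - D^m = ∑ t ∈ Finset.range m, D^t * a^(m-t) * (m.choose t : ℝ) := by
  rw [add_pow, Finset.sum_range_succ]
  simp [Nat.choose_self]

lemma diff_identity {ι : Type*} [DecidableEq ι] (x : ι → ℝ) :
    ∀ (s : Finset ι) (A : Finset ι), A ⊆ s → ∀ m : ℕ, m + A.card ≤ s.card →
    (∑ U ∈ s.powerset,
      (-1:ℝ)^(s.card - U.card) * (if A ⊆ U then (1:ℝ) else 0) * (∑ i ∈ U, x i)^m)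
    = if m + A.card = s.card then (m.factorial : ℝ) * ∏ i ∈ s \ A, x i else 0 := by
  intro s
  induction s using Finset.induction_on with
  | empty =>
      intro A hA m hm
      rw [Finset.subset_empty.mp hA] at *
      simp only [Finset.card_empty, Nat.add_zero, Nat.le_zero] at hm
      subst hm
      simp
  | @insert j s hj ih =>
      intro A hA m hm
      rw [Finset.sum_powerset_insert hj]
      rw [Finset.card_insert_of_notMem hj] at hm ⊢
      by_cases hjA : j ∈ A
      · -- j ∈ A
        have hA'e : A = insert j (A.erase j) := (Finset.insert_erase hjA).symm
        have hjA' : j ∉ A.erase j := Finset.notMem_erase j A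
        have hcardA : A.card = (A.erase j).card + 1 := by
          conv_lhs => rw [hA'e]
          rw [Finset.card_insert_of_notMem hjA']
        have hA's : A.erase j ⊆ s := by
          intro i hi
          have hiA : i ∈ A := Finset.mem_of_mem_erase hi
          rcases Finset.mem_insert.mp (hA hiA) with h | h
          · exact absurd h (Finset.ne_of_mem_erase hi)
          · exact h
        have hsum1 : (∑ U ∈ s.powerset,
            (-1:ℝ)^(s.card + 1 - U.card) * (if A ⊆ U then (1:ℝ) else 0) * (∑ i ∈ U, x i)^m) = 0 := by
          apply Finset.sum_eq_zero
          intro U hU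
          have hUs := Finset.mem_powerset.mp hU
          have hnot : ¬ A ⊆ U := fun h => hj (hUs (h hjA))
          rw [if_neg hnot, mul_zero, zero_mul]
        rw [hsum1, zero_add]
        have hsum2 : ∀ U ∈ s.powerset,
            (-1:ℝ)^(s.card + 1 - (insert j U).card) * (if A ⊆ insert j U then (1:ℝ) else 0)
              * (∑ i ∈ insert j U, x i)^m
            = ∑ t ∈ Finset.range (m+1),
                (-1:ℝ)^(s.card - U.card) * (if A.erase j ⊆ U then (1:ℝ) else 0) * (∑ i ∈ U, x i)^t
                  * (x j ^ (m - t) * (m.choose t : ℝ)) := by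
          intro U hU
          have hUs := Finset.mem_powerset.mp hU
          have hjU : j ∉ U := fun h => hj (hUs h)
          have hcU : U.card ≤ s.card := Finset.card_le_card hUs
          rw [Finset.card_insert_of_notMem hjU, Finset.sum_insert hjU]
          have e2 : s.card + 1 - (U.card + 1) = s.card - U.card := by omega
          rw [e2]
          have hiff : (A ⊆ insert j U) = (A.erase j ⊆ U) := by
            apply propext; constructor
            · intro h i hi
              have hmem : i ∈ insert j U := h (Finset.mem_of_mem_erase hi)
              rcases Finset.mem_insert.mp hmem with h' | h'
              · exact absurd h' (Finset.ne_of_mem_erase hi)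
              · exact h'
            · intro h
              rw [hA'e]
              exact Finset.insert_subset_insert _ h
          simp only [hiff]
          rw [add_comm (x j), add_pow, Finset.mul_sum]
          apply Finset.sum_congr rfl
          intro t ht
          ring
        rw [Finset.sum_congr rfl hsum2, Finset.sum_comm]
        have hsum3 : ∀ t ∈ Finset.range (m+1),
            (∑ U ∈ s.powerset,
              (-1:ℝ)^(s.card - U.card) * (if A.erase j ⊆ U then (1:ℝ) else 0) * (∑ i ∈ U, x i)^t
                * (x j ^ (m - t) * (m.choose t : ℝ)))
            = (if t + (A.erase j).card = s.card then (t.factorial : ℝ) * ∏ i ∈ s \ A.erase j, x i else 0)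
                * (x j ^ (m - t) * (m.choose t : ℝ)) := by
          intro t ht
          have ht' := Finset.mem_range.mp ht
          rw [← Finset.sum_mul]
          congr 1
          exact ih (A.erase j) hA's t (by omega)
        rw [Finset.sum_congr rfl hsum3]
        by_cases hEq : m + A.card = s.card + 1
        · rw [if_pos hEq]
          have hmem : m ∈ Finset.range (m+1) := Finset.self_mem_range_succ m
          rw [Finset.sum_eq_single_of_mem m hmem]
          · rw [if_pos (by omega)]
            have hprodeq : (insert j s) \ A = s \ A.erase j := by
              ext i
              simp only [Finset.mem_sdiff, Finset.mem_insert, Finset.mem_erase]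
              constructor
              · rintro ⟨h1 | h1, h2⟩
                · exact absurd hjA (h1 ▸ h2)
                · exact ⟨h1, fun hh => h2 hh.2⟩
              · rintro ⟨h1, h2⟩
                refine ⟨Or.inr h1, fun hiA => h2 ⟨?_, hiA⟩⟩
                intro hij
                exact hj (hij ▸ h1)
            rw [hprodeq]
            simp [Nat.choose_self]
          · intro t ht htm
            rw [if_neg (by have := Finset.mem_range.mp ht; omega), zero_mul]
        · rw [if_neg hEq]
          apply Finset.sum_eq_zero
          intro t ht
          rw [if_neg (by have := Finset.mem_range.mp ht; omega), zero_mul]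
      · -- j ∉ A
        have hAs : A ⊆ s := by
          intro i hi
          rcases Finset.mem_insert.mp (hA hi) with h | h
          · exact absurd (h ▸ hi) hjA
          · exact h
        rw [← Finset.sum_add_distrib]
        have hcomb : ∀ U ∈ s.powerset,
            ((-1:ℝ)^(s.card + 1 - U.card) * (if A ⊆ U then (1:ℝ) else 0) * (∑ i ∈ U, x i)^m
            + (-1:ℝ)^(s.card + 1 - (insert j U).card) * (if A ⊆ insert j U then (1:ℝ) else 0)
                * (∑ i ∈ insert j U, x i)^m)
            = ∑ t ∈ Finset.range m,
                (-1:ℝ)^(s.card - U.card) * (if A ⊆ U then (1:ℝ) else 0) * (∑ i ∈ U, x i)^t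
                  * (x j ^ (m - t) * (m.choose t : ℝ)) := by
          intro U hU
          have hUs := Finset.mem_powerset.mp hU
          have hjU : j ∉ U := fun h => hj (hUs h)
          have hcU : U.card ≤ s.card := Finset.card_le_card hUs
          rw [Finset.card_insert_of_notMem hjU, Finset.sum_insert hjU]
          have hiff : (A ⊆ insert j U) = (A ⊆ U) :=
            propext (Finset.subset_insert_iff_of_notMem hjA)
          simp only [hiff]
          have e1 : s.card + 1 - U.card = (s.card - U.card) + 1 := by omega
          have e2 : s.card + 1 - (U.card + 1) = s.card - U.card := by omega
          rw [e1, e2, pow_succ, add_comm (x j)]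
          have hbin := binom_diff (∑ i ∈ U, x i) (x j) m
          calc (-1:ℝ)^(s.card - U.card) * -1 * (if A ⊆ U then (1:ℝ) else 0) * (∑ i ∈ U, x i)^m
              + (-1:ℝ)^(s.card - U.card) * (if A ⊆ U then (1:ℝ) else 0) * (∑ i ∈ U, x i + x j)^m
              = (-1:ℝ)^(s.card - U.card) * (if A ⊆ U then (1:ℝ) else 0)
                  * ((∑ i ∈ U, x i + x j)^m - (∑ i ∈ U, x i)^m) := by ring
            _ = _ := by
                rw [hbin, Finset.mul_sum]
                apply Finset.sum_congr rfl
                intro t ht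
                ring
        rw [Finset.sum_congr rfl hcomb, Finset.sum_comm]
        have hsum3 : ∀ t ∈ Finset.range m,
            (∑ U ∈ s.powerset,
              (-1:ℝ)^(s.card - U.card) * (if A ⊆ U then (1:ℝ) else 0) * (∑ i ∈ U, x i)^t
                * (x j ^ (m - t) * (m.choose t : ℝ)))
            = (if t + A.card = s.card then (t.factorial : ℝ) * ∏ i ∈ s \ A, x i else 0)
                * (x j ^ (m - t) * (m.choose t : ℝ)) := by
          intro t ht
          have ht' := Finset.mem_range.mp ht
          rw [← Finset.sum_mul]
          congr 1
          exact ih A hAs t (by omega)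
        rw [Finset.sum_congr rfl hsum3]
        by_cases hEq : m + A.card = s.card + 1
        · rw [if_pos hEq]
          have hAc : A.card ≤ s.card := Finset.card_le_card hAs
          have hm1 : 1 ≤ m := by omega
          have hmem : m - 1 ∈ Finset.range m := by rw [Finset.mem_range]; omega
          rw [Finset.sum_eq_single_of_mem (m-1) hmem]
          · rw [if_pos (by omega)]
            have hprodeq : (insert j s) \ A = insert j (s \ A) := by
              ext i
              simp only [Finset.mem_sdiff, Finset.mem_insert]
              constructor
              · rintro ⟨h1 | h1, h2⟩
                · exact Or.inl h1
                · exact Or.inr ⟨h1, h2⟩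
              · rintro (rfl | ⟨h1, h2⟩)
                · exact ⟨Or.inl rfl, hjA⟩
                · exact ⟨Or.inr h1, h2⟩
            rw [hprodeq, Finset.prod_insert (fun h => hj (Finset.mem_sdiff.mp h).1)]
            have hC : (m.choose (m-1)) = m := by
              rw [Nat.choose_symm (show 1 ≤ m by omega), Nat.choose_one_right]
            have hxp : m - (m-1) = 1 := by omega
            rw [hxp, hC]
            have hfac : ((m - 1).factorial * m : ℕ) = m.factorial := by
              rw [mul_comm]
              exact Nat.mul_factorial_pred (by omega)
            push_cast [← hfac]
            ring
          · intro t ht htm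
            rw [if_neg (by have := Finset.mem_range.mp ht; omega), zero_mul]
        · rw [if_neg hEq]
          apply Finset.sum_eq_zero
          intro t ht
          rw [if_neg (by have := Finset.mem_range.mp ht; omega), zero_mul]



section NFmach

variable {d : ℕ}

noncomputable def linCLM (w : Fin d → ℝ) : (Fin d → ℝ) →L[ℝ] ℝ :=
  ∑ l, w l • ContinuousLinearMap.proj l

lemma linCLM_apply (w v : Fin d → ℝ) : linCLM w v = ∑ l, w l * v l := by
  simp [linCLM, smul_eq_mul]

lemma linCLM_single (w : Fin d → ℝ) (i : Fin d) : linCLM w (Pi.single i 1) = w i := by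
  rw [linCLM_apply]
  simp [Pi.single_apply, mul_ite]

lemma hasFDerivAt_lin (w : Fin d → ℝ) (θ : ℝ) (x : Fin d → ℝ) :
    HasFDerivAt (fun x : Fin d → ℝ => (∑ l, w l * x l) + θ) (linCLM w) x := by
  have h := ((linCLM w).hasFDerivAt (x := x)).add_const θ
  simp only [linCLM_apply] at h
  exact h

noncomputable def monCLM (T : Finset (Fin d)) (x : Fin d → ℝ) : (Fin d → ℝ) →L[ℝ] ℝ :=
  ∑ j ∈ T, (∏ l ∈ T.erase j, x l) • ContinuousLinearMap.proj j

lemma mon_hasFDerivAt (T : Finset (Fin d)) (x : Fin d → ℝ) :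
    HasFDerivAt (fun y : Fin d → ℝ => ∏ i ∈ T, y i) (monCLM T x) x := by
  induction T using Finset.induction_on with
  | empty => simpa [monCLM] using hasFDerivAt_const (1:ℝ) x
  | @insert i T hi ih =>
      have h1 := hasFDerivAt_apply (𝕜 := ℝ) (F' := fun _ : Fin d => ℝ) i x
      have h2 := h1.mul ih
      have e : (fun y : Fin d → ℝ => ∏ l ∈ insert i T, y l)
          = fun y => y i * ∏ l ∈ T, y l := by
        funext y; rw [Finset.prod_insert hi]
      rw [e]
      have e2 : monCLM (insert i T) x
          = x i • monCLM T x + (∏ l ∈ T, x l) • ContinuousLinearMap.proj i := by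
        rw [monCLM, Finset.sum_insert hi, Finset.erase_insert hi, add_comm]
        congr 1
        rw [monCLM, Finset.smul_sum]
        apply Finset.sum_congr rfl
        intro j hjT
        have hij : i ≠ j := fun h => hi (h ▸ hjT)
        rw [Finset.erase_insert_of_ne hij, Finset.prod_insert (fun h => hi (Finset.mem_of_mem_erase h)), smul_smul]
      rw [e2]
      exact h2

lemma pder_mon (T : Finset (Fin d)) (i : Fin d) :
    pder i (fun y : Fin d → ℝ => ∏ l ∈ T, y l)
      = fun x => if i ∈ T then ∏ l ∈ T.erase i, x l else 0 := by
  funext x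
  rw [pder, (mon_hasFDerivAt T x).fderiv, monCLM]
  simp only [ContinuousLinearMap.coe_sum', Finset.sum_apply,
    ContinuousLinearMap.coe_smul', Pi.smul_apply, ContinuousLinearMap.proj_apply,
    Pi.single_apply, smul_eq_mul, mul_ite, mul_one, mul_zero]
  exact Finset.sum_ite_eq' T i _

end NFmach

section NF

variable {d : ℕ} {ι : Type*} [Fintype ι]

noncomputable def NF (θ : ℝ) (a : ι → ℝ) (w : ι → Fin d → ℝ) (n : ℕ) (c : ℝ)
    (T : Finset (Fin d)) : (Fin d → ℝ) → ℝ :=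
  fun x => (∑ U : ι, a U * Tder n ((∑ l, w U l * x l) + θ)) + c * ∏ i ∈ T, x i

lemma NF_hasFDerivAt (θ : ℝ) (a : ι → ℝ) (w : ι → Fin d → ℝ) (n : ℕ) (c : ℝ)
    (T : Finset (Fin d)) (x : Fin d → ℝ) :
    HasFDerivAt (NF θ a w n c T)
      ((∑ U : ι, (a U * Tder (n+1) ((∑ l, w U l * x l) + θ)) • linCLM (w U))
        + c • monCLM T x) x := by
  apply HasFDerivAt.add
  · apply HasFDerivAt.fun_sum
    intro U _
    have hin := hasFDerivAt_lin (w U) θ x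
    have hout : HasFDerivAt (fun x : Fin d → ℝ => Tder n ((∑ l, w U l * x l) + θ))
        (Tder (n+1) ((∑ l, w U l * x l) + θ) • linCLM (w U)) x :=
      by have := (Tder_hasDerivAt n ((∑ l, w U l * x l) + θ)).comp_hasFDerivAt x hin; exact this
    have hfin := hout.const_mul (a U)
    rw [smul_smul] at hfin
    exact hfin
  · exact (mon_hasFDerivAt T x).const_mul c

lemma pder_NF (θ : ℝ) (a : ι → ℝ) (w : ι → Fin d → ℝ) (n : ℕ) (c : ℝ)
    (T : Finset (Fin d)) (i : Fin d) :
    pder i (NF θ a w n c T)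
      = NF θ (fun U => a U * w U i) w (n+1) (if i ∈ T then c else 0) (T.erase i) := by
  funext x
  rw [pder, (NF_hasFDerivAt θ a w n c T x).fderiv]
  have hmon : monCLM T x (Pi.single i 1) = (if i ∈ T then ∏ l ∈ T.erase i, x l else 0) := by
    rw [monCLM]
    simp only [ContinuousLinearMap.coe_sum', Finset.sum_apply,
      ContinuousLinearMap.coe_smul', Pi.smul_apply, ContinuousLinearMap.proj_apply,
      Pi.single_apply, smul_eq_mul, mul_ite, mul_one, mul_zero]
    exact Finset.sum_ite_eq' T i _
  simp only [ContinuousLinearMap.add_apply, ContinuousLinearMap.coe_sum', Finset.sum_apply,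
    ContinuousLinearMap.coe_smul', Pi.smul_apply, smul_eq_mul, hmon, linCLM_single]
  rw [NF]
  congr 1
  · apply Finset.sum_congr rfl
    intro U _
    ring
  · by_cases hiT : i ∈ T
    · rw [if_pos hiT, if_pos hiT]
    · rw [if_neg hiT, if_neg hiT, mul_zero, zero_mul]

lemma pder_iter_NF (θ : ℝ) (a : ι → ℝ) (w : ι → Fin d → ℝ) (n : ℕ) (c : ℝ)
    (T : Finset (Fin d)) (i : Fin d) (m : ℕ) :
    (pder i)^[m] (NF θ a w n c T)
      = NF θ (fun U => a U * (w U i)^m) w (n+m)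
          (if m = 0 then c else if i ∈ T ∧ m = 1 then c else 0)
          (if m = 0 then T else T.erase i) := by
  induction m with
  | zero => simp
  | succ m ih =>
      rw [Function.iterate_succ_apply', ih, pder_NF]
      have ha : (fun U => a U * (w U i)^m * w U i) = (fun U => a U * (w U i)^(m+1)) := by
        funext U; rw [pow_succ]; ring
      rw [ha]
      have hT : ((if m = 0 then T else T.erase i).erase i) = T.erase i := by
        by_cases hm : m = 0
        · rw [if_pos hm]
        · rw [if_neg hm, Finset.erase_idem]
      have hc : (if i ∈ (if m = 0 then T else T.erase i) then
            (if m = 0 then c else if i ∈ T ∧ m = 1 then c else 0) else 0)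
          = (if m + 1 = 0 then c else if i ∈ T ∧ m + 1 = 1 then c else 0) := by
        by_cases hm : m = 0
        · subst hm
          simp
        · have hni : i ∉ T.erase i := Finset.notMem_erase i T
          rw [if_neg hm, if_neg hni, if_neg (show ¬(m+1=0) by omega),
            if_neg (show ¬(i ∈ T ∧ m+1=1) by rintro ⟨-, h⟩; omega)]
      rw [hT, hc, if_neg (show ¬(m+1=0) by omega), show n + m + 1 = n + (m+1) by omega]
      rw [if_neg (show ¬(m+1=0) by omega)]


lemma foldl_NF (θ : ℝ) (w : ι → Fin d → ℝ) (α : Fin d → ℕ) :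
    ∀ (l : List (Fin d)), l.Nodup → ∀ (T : Finset (Fin d)), (∀ i ∈ l, i ∈ T) →
      ∀ (n : ℕ) (c : ℝ) (a : ι → ℝ),
      l.foldl (fun g i => (pder i)^[α i] g) (NF θ a w n c T)
      = NF θ (fun U => a U * ∏ i ∈ l.toFinset, (w U i)^(α i)) w (n + ∑ i ∈ l.toFinset, α i)
          (if ∀ i ∈ l, α i ≤ 1 then c else 0)
          (T \ l.toFinset.filter (fun i => α i ≠ 0)) := by
  intro l
  induction l with
  | nil =>
      intro _ T _ n c a
      simp
  | cons i l ihl =>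
      intro hnd T hmem n c a
      have hndl : l.Nodup := (List.nodup_cons.mp hnd).2
      have hil : i ∉ l := (List.nodup_cons.mp hnd).1
      have hiT : i ∈ T := hmem i (List.mem_cons_self)
      rw [List.foldl_cons, pder_iter_NF]
      set T₁ := (if α i = 0 then T else T.erase i) with hT₁
      have hmem₁ : ∀ j ∈ l, j ∈ T₁ := by
        intro j hj
        have hjT := hmem j (List.mem_cons_of_mem i hj)
        have hji : j ≠ i := fun h => hil (h ▸ hj)
        rw [hT₁]
        by_cases h0 : α i = 0
        · rw [if_pos h0]; exact hjT
        · rw [if_neg h0]; exact Finset.mem_erase.mpr ⟨hji, hjT⟩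
      rw [ihl hndl T₁ hmem₁]
      have hitf : i ∉ l.toFinset := fun h => hil (List.mem_toFinset.mp h)
      have htf : (i :: l).toFinset = insert i l.toFinset := by
        simp [List.toFinset_cons]
      -- a component
      have ha : (fun U => a U * (w U i)^(α i) * ∏ j ∈ l.toFinset, (w U j)^(α j))
          = (fun U => a U * ∏ j ∈ (i :: l).toFinset, (w U j)^(α j)) := by
        funext U
        rw [htf, Finset.prod_insert hitf]
        ring
      -- n component
      have hn : n + α i + ∑ j ∈ l.toFinset, α j = n + ∑ j ∈ (i :: l).toFinset, α j := by
        rw [htf, Finset.sum_insert hitf]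
        omega
      -- c component
      have hc : (if ∀ j ∈ l, α j ≤ 1 then
            (if α i = 0 then c else if i ∈ T ∧ α i = 1 then c else 0) else 0)
          = (if ∀ j ∈ (i :: l), α j ≤ 1 then c else 0) := by
        by_cases hl : ∀ j ∈ l, α j ≤ 1
        · by_cases h0 : α i = 0
          · rw [if_pos hl, if_pos h0,
              if_pos (by intro j hj; rcases List.mem_cons.mp hj with rfl | hj'; exacts [by omega, hl j hj'])]
          · by_cases h1 : α i = 1
            · rw [if_pos hl, if_neg h0, if_pos ⟨hiT, h1⟩,
                if_pos (by intro j hj; rcases List.mem_cons.mp hj with rfl | hj'; exacts [by omega, hl j hj'])]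
            · rw [if_pos hl, if_neg h0, if_neg (by rintro ⟨-, h⟩; exact h1 h),
                if_neg (by intro h; have := h i (List.mem_cons_self); omega)]
        · rw [if_neg hl, if_neg (fun h => hl (fun j hj => h j (List.mem_cons_of_mem i hj)))]
      -- T component
      have hT : T₁ \ l.toFinset.filter (fun j => α j ≠ 0)
          = T \ (i :: l).toFinset.filter (fun j => α j ≠ 0) := by
        rw [htf, hT₁]
        by_cases h0 : α i = 0
        · rw [if_pos h0, Finset.filter_insert, if_neg (by simp [h0])]
        · rw [if_neg h0, Finset.filter_insert, if_pos (by simp [h0])]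
          ext j
          simp only [Finset.mem_sdiff, Finset.mem_erase, Finset.mem_insert, Finset.mem_filter]
          constructor
          · rintro ⟨⟨hji, hjT⟩, hnf⟩
            exact ⟨hjT, by rintro (rfl | hf); exact hji rfl; exact hnf hf⟩
          · rintro ⟨hjT, hnf⟩
            refine ⟨⟨fun h => hnf (Or.inl h), hjT⟩, fun hf => hnf (Or.inr hf)⟩
      rw [ha, hn, hc, hT]

lemma mder_NF (θ : ℝ) (a : ι → ℝ) (w : ι → Fin d → ℝ) (c : ℝ) (α : Fin d → ℕ) :
    mder α (NF θ a w 0 c Finset.univ)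
      = NF θ (fun U => a U * ∏ i, (w U i)^(α i)) w (∑ i, α i)
          (if ∀ i, α i ≤ 1 then c else 0)
          (Finset.univ.filter (fun i => α i = 0)) := by
  rw [mder, foldl_NF θ w α (List.finRange d) (List.nodup_finRange d) Finset.univ
    (fun i _ => Finset.mem_univ i) 0 c a]
  rw [List.toFinset_finRange, zero_add]
  have h1 : (if ∀ i ∈ List.finRange d, α i ≤ 1 then c else 0) = (if ∀ i, α i ≤ 1 then c else 0) := by
    by_cases h : ∀ i, α i ≤ 1
    · rw [if_pos (fun i _ => h i), if_pos h]
    · rw [if_neg (fun hh => h (fun i => hh i (List.mem_finRange i))), if_neg h]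
  have h2 : Finset.univ \ Finset.univ.filter (fun i => α i ≠ 0)
      = Finset.univ.filter (fun i => α i = 0) := by
    ext j
    simp only [Finset.mem_sdiff, Finset.mem_univ, Finset.mem_filter, true_and]
    tauto
  rw [h1, h2]

end NF


end Aux

set_option maxHeartbeats 2000000

/-- **Corollary 3.5 (Shallow approximation of multiplication of `d` numbers).**
For `d ≥ 1`, `k ∈ ℕ₀`, `M > 0` and every `ε > 0`, there is a shallow tanh neural network
`×̂ : [-M,M]^d → ℝ` of width `3⌈(d+1)/2⌉ |P_{d,d}|` with
`‖×̂(x) - ∏ᵢ xᵢ‖_{W^{k,∞}([-M,M]^d)} ≤ ε`. -/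
theorem shallow_tanh_approx_multiplication (d : ℕ) (hd : 1 ≤ d) (k : ℕ)
    (M : ℝ) (hM : 0 < M) (ε : ℝ) (hε : 0 < ε) :
    ∃ Ψ : (Fin d → ℝ) → ℝ,
      IsShallowTanhScalar (3 * ((d + 2) / 2) * (Finset.Nat.antidiagonalTuple d d).card) Ψ ∧
      sobNorm k (Set.Icc (fun _ => -M) (fun _ => M))
        (fun x => Ψ x - ∏ i, x i) ≤ ε := by
  classical
  obtain ⟨θ, hθ⟩ := exists_Tder_ne_zero d
  have hTθ : 0 < |Tder d θ| := abs_pos.mpr hθ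
  set Bsum : ℝ := ∑ j ∈ Finset.range (k + d + 2), Bnd j with hBsum
  have hBsum0 : 0 ≤ Bsum := Finset.sum_nonneg fun j _ => Bnd_nonneg j
  set KK : ℝ := 2^d * (1 + d*M)^(d+1) * Bsum with hKK
  have hdM0 : (0:ℝ) ≤ (d:ℝ) * M := by positivity
  have hKK0 : 0 ≤ KK := by
    rw [hKK]
    have h1 : (0:ℝ) ≤ (1 + d*M)^(d+1) := by positivity
    positivity
  set δ : ℝ := min 1 (ε * |Tder d θ| / (KK + 1)) with hδ
  have hδ0 : 0 < δ := lt_min one_pos (by positivity)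
  have hδ1 : δ ≤ 1 := min_le_left _ _
  have hδne : δ ≠ 0 := ne_of_gt hδ0
  have hKKδ : KK * δ ≤ ε * |Tder d θ| := by
    have h1 : δ ≤ ε * |Tder d θ| / (KK + 1) := min_le_right _ _
    have h2 : KK * δ ≤ KK * (ε * |Tder d θ| / (KK + 1)) :=
      mul_le_mul_of_nonneg_left h1 hKK0
    have h3 : KK * (ε * |Tder d θ| / (KK + 1)) ≤ ε * |Tder d θ| := by
      rw [mul_comm, div_mul_eq_mul_div, div_le_iff₀ (by positivity : (0:ℝ) < KK+1)]
      nlinarith [mul_pos hε hTθ]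
    linarith
  set a : Finset (Fin d) → ℝ := fun U => (-1:ℝ)^(d - U.card) / (Tder d θ * δ^d) with ha
  set w : Finset (Fin d) → Fin d → ℝ := fun U l => if l ∈ U then δ else 0 with hw
  set Ψ : (Fin d → ℝ) → ℝ :=
    fun x => ∑ U : Finset (Fin d), a U * Real.tanh ((∑ l, w U l * x l) + θ) with hΨ
  refine ⟨Ψ, ?_, ?_⟩
  · -- the network is shallow of the required width
    have hcardF : Fintype.card (Finset (Fin d)) = 2^d := by
      rw [Fintype.card_finset, Fintype.card_fin]
    obtain ⟨m, rfl⟩ : ∃ m, d = m + 1 := ⟨d - 1, by omega⟩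
    have hinj : 2^m ≤ (Finset.Nat.antidiagonalTuple (m+1) (m+1)).card := by
      have hcard2 : (Finset.univ : Finset (Fin m → Bool)).card = 2^m := by
        rw [Finset.card_univ, Fintype.card_fun, Fintype.card_bool, Fintype.card_fin]
      rw [← hcard2]
      apply Finset.card_le_card_of_injOn
        (fun b : Fin m → Bool =>
          Fin.snoc (fun i => if b i then 1 else 0) (m + 1 - ∑ i, if b i then 1 else 0))
      · intro b _
        rw [Finset.mem_coe, Finset.Nat.mem_antidiagonalTuple]
        have hs : (∑ i : Fin m, if b i then 1 else 0) ≤ m := by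
          calc (∑ i : Fin m, if b i then 1 else 0) ≤ ∑ _i : Fin m, 1 :=
                Finset.sum_le_sum (fun i _ => by split <;> omega)
            _ = m := by simp
        rw [Fin.sum_univ_castSucc]
        simp only [Fin.snoc_castSucc, Fin.snoc_last]
        omega
      · intro b _ b' _ heq
        funext i
        have hco := congrFun heq i.castSucc
        simp only [Fin.snoc_castSucc] at hco
        by_cases hb : b i <;> by_cases hb' : b' i <;> simp [hb, hb'] at hco ⊢
    have hW : 2^(m+1) ≤ 3 * ((m + 1 + 2) / 2) * (Finset.Nat.antidiagonalTuple (m+1) (m+1)).card := by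
      have h1 : 1 ≤ (m + 1 + 2) / 2 := by omega
      have h2 : 2^m ≤ (m + 1 + 2) / 2 * (Finset.Nat.antidiagonalTuple (m+1) (m+1)).card := by
        calc 2^m = 1 * 2^m := (one_mul _).symm
          _ ≤ (m + 1 + 2) / 2 * (Finset.Nat.antidiagonalTuple (m+1) (m+1)).card :=
              Nat.mul_le_mul h1 hinj
      calc 2^(m+1) = 2 * 2^m := by rw [pow_succ]; ring
        _ ≤ 3 * ((m + 1 + 2) / 2 * (Finset.Nat.antidiagonalTuple (m+1) (m+1)).card) := by
            have := Nat.mul_le_mul (show 2 ≤ 3 by omega) h2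
            omega
        _ = 3 * ((m + 1 + 2) / 2) * (Finset.Nat.antidiagonalTuple (m+1) (m+1)).card := by
            rw [Nat.mul_assoc]
    obtain ⟨e⟩ : Nonempty ((Finset (Fin (m+1))) ↪
        Fin (3 * ((m + 1 + 2) / 2) * (Finset.Nat.antidiagonalTuple (m+1) (m+1)).card)) := by
      apply Function.Embedding.nonempty_of_card_le
      rw [hcardF, Fintype.card_fin]
      exact hW
    refine ⟨Matrix.of (fun j l =>
        if j ∈ Finset.univ.image e then w (Function.invFun e j) l else 0),
      (fun _ => θ),
      (fun j => if j ∈ Finset.univ.image e then a (Function.invFun e j) else 0), 0, ?_⟩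
    intro x
    symm
    rw [add_zero]
    rw [← Finset.sum_subset (Finset.subset_univ (Finset.univ.image e))
      (by
        intro j _ hj
        simp only [if_neg hj, zero_mul])]
    rw [Finset.sum_image (fun u _ v _ huv => e.injective huv)]
    rw [hΨ]
    apply Finset.sum_congr rfl
    intro U _
    have hUim : e U ∈ Finset.univ.image e := Finset.mem_image_of_mem e (Finset.mem_univ U)
    have hUinv : Function.invFun e (e U) = U := Function.leftInverse_invFun e.injective U
    simp only [Matrix.of_apply, if_pos hUim, hUinv]
  · -- the Sobolev norm bound
    rw [sobNorm]
    apply Real.iSup_le _ hε.le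
    rintro ⟨⟨α, x⟩, hk, hxS⟩
    show |mder α (fun x => Ψ x - ∏ i, x i) x| ≤ ε
    have hx : ∀ i, |x i| ≤ M := by
      rw [Set.mem_Icc] at hxS
      intro i
      rw [abs_le]
      exact ⟨hxS.1 i, hxS.2 i⟩
    have hF : (fun y => Ψ y - ∏ i, y i) = NF θ a w 0 (-1) Finset.univ := by
      funext y
      rw [hΨ]
      simp only [NF, Tder, tanhPoly, Polynomial.eval_X]
      ring
    rw [hF, mder_NF]
    set r := ∑ i, α i with hr
    set A := Finset.univ.filter (fun i => α i ≠ 0) with hA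
    have hAone : ∀ i ∈ A, 1 ≤ α i := by
      intro i hi
      have := (Finset.mem_filter.mp hi).2
      omega
    have hAcard : A.card ≤ r := by
      rw [Finset.card_eq_sum_ones]
      calc (∑ _i ∈ A, 1) ≤ ∑ i ∈ A, α i := Finset.sum_le_sum hAone
        _ ≤ ∑ i, α i := Finset.sum_le_sum_of_subset (Finset.filter_subset _ _)
    have hsum_eq : ∑ i ∈ A, α i = r := by
      rw [hr]
      apply Finset.sum_subset (Finset.subset_univ A)
      intro i _ hi
      rw [hA, Finset.mem_filter] at hi
      push_neg at hi
      exact hi (Finset.mem_univ i)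
    have hwpow : ∀ U : Finset (Fin d),
        (∏ i, (w U i)^(α i)) = δ^r * (if A ⊆ U then (1:ℝ) else 0) := by
      intro U
      by_cases hAU : A ⊆ U
      · rw [if_pos hAU, mul_one, hr, ← Finset.prod_pow_eq_pow_sum]
        apply Finset.prod_congr rfl
        intro i _
        by_cases h0 : α i = 0
        · rw [h0, pow_zero, pow_zero]
        · have hiU : i ∈ U := hAU (by rw [hA]; exact Finset.mem_filter.mpr ⟨Finset.mem_univ i, h0⟩)
          simp only [hw]
          rw [if_pos hiU]
      · rw [if_neg hAU, mul_zero]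
        obtain ⟨i, hiA, hiU⟩ := Finset.not_subset.mp hAU
        apply Finset.prod_eq_zero (Finset.mem_univ i)
        have h0 : α i ≠ 0 := by
          rw [hA, Finset.mem_filter] at hiA
          exact hiA.2
        simp only [hw]
        rw [if_neg hiU, zero_pow h0]
    have hdot : ∀ (U : Finset (Fin d)) (y : Fin d → ℝ),
        (∑ l, w U l * y l) = δ * ∑ l ∈ U, y l := by
      intro U y
      rw [Finset.mul_sum]
      simp only [hw, ite_mul, zero_mul]
      rw [Finset.sum_ite_mem, Finset.univ_inter]
    have hdotbd : ∀ U : Finset (Fin d), |∑ l ∈ U, x l| ≤ d * M := by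
      intro U
      calc |∑ l ∈ U, x l| ≤ ∑ l ∈ U, |x l| := Finset.abs_sum_le_sum_abs _ _
        _ ≤ ∑ _l ∈ U, M := Finset.sum_le_sum (fun l _ => hx l)
        _ = U.card * M := by rw [Finset.sum_const, nsmul_eq_mul]
        _ ≤ d * M := by
            apply mul_le_mul_of_nonneg_right _ hM.le
            have hUc : U.card ≤ d :=
              (Finset.card_le_card (Finset.subset_univ U)).trans_eq
                (by rw [Finset.card_univ, Fintype.card_fin])
            exact_mod_cast hUc
    set Sg : ℝ := ∑ U : Finset (Fin d),
        (-1:ℝ)^(d - U.card) * (if A ⊆ U then (1:ℝ) else 0)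
          * Tder r (δ * (∑ l ∈ U, x l) + θ) with hSg
    have hNFval : NF θ (fun U => a U * ∏ i, w U i ^ α i) w r
          (if ∀ i, α i ≤ 1 then (-1:ℝ) else 0) (Finset.univ.filter fun i => α i = 0) x
        = (δ^r / (Tder d θ * δ^d)) * Sg
            + (if ∀ i, α i ≤ 1 then (-1:ℝ) else 0)
                * ∏ i ∈ Finset.univ.filter (fun i => α i = 0), x i := by
      simp only [NF, hdot, hwpow, hSg]
      congr 1
      rw [Finset.mul_sum]
      apply Finset.sum_congr rfl
      intro U _
      simp only [ha]
      ring
    rw [hNFval]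
    have hδd : δ^d ≠ 0 := pow_ne_zero _ hδne
    have hTne : |Tder d θ| ≠ 0 := ne_of_gt hTθ
    have hSgbd : |Sg| ≤ 2^d * Bnd r := by
      rw [hSg]
      refine (Finset.abs_sum_le_sum_abs _ _).trans ?_
      have hterm : ∀ U : Finset (Fin d),
          |(-1:ℝ)^(d - U.card) * (if A ⊆ U then (1:ℝ) else 0)
            * Tder r (δ * (∑ l ∈ U, x l) + θ)| ≤ Bnd r := by
        intro U
        rw [abs_mul, abs_mul, abs_pow, abs_neg, abs_one, one_pow, one_mul]
        calc |if A ⊆ U then (1:ℝ) else 0| * |Tder r (δ * (∑ l ∈ U, x l) + θ)|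
            ≤ 1 * Bnd r := by
              apply mul_le_mul _ (abs_Tder_le _ _) (abs_nonneg _) zero_le_one
              split <;> simp
          _ = Bnd r := one_mul _
      calc (∑ U : Finset (Fin d), |(-1:ℝ)^(d - U.card) * (if A ⊆ U then (1:ℝ) else 0)
            * Tder r (δ * (∑ l ∈ U, x l) + θ)|)
          ≤ ∑ _U : Finset (Fin d), Bnd r := Finset.sum_le_sum (fun U _ => hterm U)
        _ = 2^d * Bnd r := by
            rw [Finset.sum_const, Finset.card_univ, Fintype.card_finset, Fintype.card_fin,
              nsmul_eq_mul]
            push_cast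
            ring
    have hBr : Bnd r ≤ Bsum := by
      rw [hBsum]
      exact Finset.single_le_sum (fun j _ => Bnd_nonneg j) (Finset.mem_range.mpr (by omega))
    by_cases hrd : r ≤ d
    · -- case r ≤ d : Taylor estimate
      set m := d - r with hm
      have hrm : r + m = d := by omega
      set pp : ℝ := if ∀ i, α i ≤ 1 then ∏ i ∈ Finset.univ.filter (fun i => α i = 0), x i else 0
        with hpp
      set G : ℕ → ℝ → ℝ := fun j t =>
        (∑ U : Finset (Fin d),
          (-1:ℝ)^(d - U.card) * (if A ⊆ U then (1:ℝ) else 0) * (∑ l ∈ U, x l)^j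
            * Tder (r + j) (t * (∑ l ∈ U, x l) + θ))
        - Tder d θ * pp * (m.descFactorial j : ℝ) * t^(m - j) with hG
      have hchain : ∀ j t, HasDerivAt (G j) (G (j+1) t) t := by
        intro j t
        simp only [hG]
        apply HasDerivAt.sub
        · apply HasDerivAt.fun_sum
          intro U _
          have hlin : HasDerivAt (fun s : ℝ => s * (∑ l ∈ U, x l) + θ) (∑ l ∈ U, x l) t := by
            simpa using ((hasDerivAt_id t).mul_const (∑ l ∈ U, x l)).add_const θ
          have hT := (Tder_hasDerivAt (r+j) (t * (∑ l ∈ U, x l) + θ)).comp t hlin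
          have hC := hT.const_mul
            ((-1:ℝ)^(d - U.card) * (if A ⊆ U then (1:ℝ) else 0) * (∑ l ∈ U, x l)^j)
          refine hC.congr_deriv ?_
          rw [show r + (j+1) = (r+j)+1 by omega]
          ring
        · have hp := (hasDerivAt_pow (m - j) t).const_mul
            (Tder d θ * pp * (m.descFactorial j : ℝ))
          refine hp.congr_deriv ?_
          rw [Nat.descFactorial_succ, show m - (j+1) = m - j - 1 by omega]
          push_cast
          ring
      have hzero : ∀ j ≤ m, G j 0 = 0 := by
        intro j hj
        simp only [hG]
        have hS := diff_identity x Finset.univ A (Finset.subset_univ A) j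
          (by rw [Finset.card_univ, Fintype.card_fin]; omega)
        rw [Finset.powerset_univ, Finset.card_univ, Fintype.card_fin] at hS
        have hsum0 : (∑ U : Finset (Fin d),
            (-1:ℝ)^(d - U.card) * (if A ⊆ U then (1:ℝ) else 0) * (∑ l ∈ U, x l)^j
              * Tder (r + j) (0 * (∑ l ∈ U, x l) + θ))
            = Tder (r + j) θ
                * (if j + A.card = d then (j.factorial:ℝ) * ∏ i ∈ Finset.univ \ A, x i else 0) := by
          rw [← hS, Finset.mul_sum]
          apply Finset.sum_congr rfl
          intro U _
          rw [zero_mul, zero_add]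
          ring
        rw [hsum0]
        by_cases hjm : j = m
        · subst hjm
          by_cases hall : ∀ i, α i ≤ 1
          · have hAr : A.card = r := by
              rw [← hsum_eq, Finset.card_eq_sum_ones]
              apply Finset.sum_congr rfl
              intro i hi
              have h1 := (Finset.mem_filter.mp hi).2
              have h2 := hall i
              omega
            rw [if_pos (by omega)]
            have hcompl : Finset.univ \ A = Finset.univ.filter (fun i => α i = 0) := by
              rw [hA]
              ext i
              simp only [Finset.mem_sdiff, Finset.mem_univ, Finset.mem_filter, true_and]
              tauto
            rw [hcompl, hpp, if_pos hall, show r + m = d from hrm, Nat.descFactorial_self,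
              Nat.sub_self, pow_zero]
            push_cast
            ring
          · have hlt : A.card < r := by
              rcases not_forall.mp hall with ⟨i, hi⟩
              have hiA : i ∈ A := by
                rw [hA]
                exact Finset.mem_filter.mpr ⟨Finset.mem_univ i, by omega⟩
              have hsl : (∑ _i ∈ A, 1) < ∑ i ∈ A, α i :=
                Finset.sum_lt_sum hAone ⟨i, hiA, by omega⟩
              rw [hsum_eq] at hsl
              rw [Finset.card_eq_sum_ones]
              exact hsl
            rw [if_neg (by omega), hpp, if_neg hall]
            ring
        · have hjlt : j < m := by omega
          rw [if_neg (by omega), zero_pow (show m - j ≠ 0 by omega)]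
          ring
      have hKb : ∀ t ∈ Set.Icc (0:ℝ) δ, |G (m+1) t| ≤ KK := by
        intro t _
        simp only [hG]
        rw [show (m.descFactorial (m+1)) = 0 from
            Nat.descFactorial_eq_zero_iff_lt.mpr (Nat.lt_succ_self m),
          Nat.cast_zero, mul_zero, zero_mul, sub_zero]
        have hterm : ∀ U : Finset (Fin d),
            |(-1:ℝ)^(d - U.card) * (if A ⊆ U then (1:ℝ) else 0) * (∑ l ∈ U, x l)^(m+1)
              * Tder (r + (m+1)) (t * (∑ l ∈ U, x l) + θ)| ≤ (1 + d*M)^(d+1) * Bsum := by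
          intro U
          rw [show r + (m+1) = d + 1 by omega]
          have h3 : |(∑ l ∈ U, x l)^(m+1)| ≤ (1 + d*M)^(d+1) := by
            rw [abs_pow]
            calc |∑ l ∈ U, x l|^(m+1) ≤ (d*M)^(m+1) :=
                  pow_le_pow_left₀ (abs_nonneg _) (hdotbd U) _
              _ ≤ (1 + d*M)^(m+1) := pow_le_pow_left₀ hdM0 (by linarith) _
              _ ≤ (1 + d*M)^(d+1) := pow_le_pow_right₀ (by linarith) (by omega)
          have h4 : |Tder (d+1) (t * (∑ l ∈ U, x l) + θ)| ≤ Bsum := by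
            refine (abs_Tder_le _ _).trans ?_
            rw [hBsum]
            exact Finset.single_le_sum (fun j _ => Bnd_nonneg j)
              (Finset.mem_range.mpr (by omega))
          rw [abs_mul, abs_mul, abs_mul, abs_pow, abs_neg, abs_one, one_pow, one_mul]
          have h2 : |(if A ⊆ U then (1:ℝ) else 0)| ≤ 1 := by split <;> simp
          calc |if A ⊆ U then (1:ℝ) else 0| * |(∑ l ∈ U, x l)^(m+1)|
                * |Tder (d+1) (t * (∑ l ∈ U, x l) + θ)|
              ≤ 1 * ((1 + d*M)^(d+1)) * Bsum := by
                apply mul_le_mul (mul_le_mul h2 h3 (abs_nonneg _) zero_le_one) h4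
                  (abs_nonneg _) (by positivity)
            _ = (1 + d*M)^(d+1) * Bsum := by ring
        calc |∑ U : Finset (Fin d),
              (-1:ℝ)^(d - U.card) * (if A ⊆ U then (1:ℝ) else 0) * (∑ l ∈ U, x l)^(m+1)
                * Tder (r + (m+1)) (t * (∑ l ∈ U, x l) + θ)|
            ≤ ∑ U : Finset (Fin d),
              |(-1:ℝ)^(d - U.card) * (if A ⊆ U then (1:ℝ) else 0) * (∑ l ∈ U, x l)^(m+1)
                * Tder (r + (m+1)) (t * (∑ l ∈ U, x l) + θ)| := Finset.abs_sum_le_sum_abs _ _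
          _ ≤ ∑ _U : Finset (Fin d), (1 + d*M)^(d+1) * Bsum :=
              Finset.sum_le_sum (fun U _ => hterm U)
          _ = 2^d * ((1 + d*M)^(d+1) * Bsum) := by
              rw [Finset.sum_const, Finset.card_univ, Fintype.card_finset, Fintype.card_fin,
                nsmul_eq_mul]
              push_cast
              ring
          _ = KK := by rw [hKK]; ring
      have hGb : |G 0 δ| ≤ KK * δ^(m+1) :=
        taylor_bound hKK0 m G hchain hzero hKb δ ⟨hδ0.le, le_refl δ⟩
      have hG0 : G 0 δ = Sg - Tder d θ * pp * δ^m := by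
        simp only [hG, hSg, pow_zero, mul_one, Nat.add_zero, Nat.descFactorial_zero,
          Nat.cast_one, Nat.sub_zero]
      have hcpp : (if ∀ i, α i ≤ 1 then (-1:ℝ) else 0)
          * ∏ i ∈ Finset.univ.filter (fun i => α i = 0), x i = -pp := by
        rw [hpp]
        split_ifs <;> ring
      have hpow : δ^m * δ^r = δ^d := by
        rw [← pow_add]
        congr 1
        omega
      have hval : (δ^r / (Tder d θ * δ^d)) * Sg
            + (if ∀ i, α i ≤ 1 then (-1:ℝ) else 0)
                * ∏ i ∈ Finset.univ.filter (fun i => α i = 0), x i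
          = G 0 δ * δ^r / (Tder d θ * δ^d) := by
        rw [hcpp, hG0, ← hpow]
        field_simp
        ring
      rw [hval]
      have hpow2 : δ^(m+1) * δ^r = δ^d * δ := by
        rw [← pow_add, show m + 1 + r = d + 1 by omega, pow_succ]
      calc |G 0 δ * δ^r / (Tder d θ * δ^d)|
          = |G 0 δ| * δ^r / (|Tder d θ| * δ^d) := by
            rw [abs_div, abs_mul, abs_mul, abs_pow, abs_pow, abs_of_pos hδ0]
        _ ≤ (KK * δ^(m+1)) * δ^r / (|Tder d θ| * δ^d) := by gcongr
        _ = KK * δ / |Tder d θ| := by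
            rw [mul_assoc, hpow2]
            field_simp
        _ ≤ ε := by
            rw [div_le_iff₀ hTθ]
            linarith [hKKδ]
    · -- case r > d : crude estimate
      have hnall : ¬ ∀ i, α i ≤ 1 := by
        intro hall
        have hle : r ≤ d := by
          rw [hr]
          calc ∑ i, α i ≤ ∑ _i : Fin d, 1 := Finset.sum_le_sum (fun i _ => hall i)
            _ = d := by simp
        omega
      rw [if_neg hnall, zero_mul, add_zero]
      have hpow2 : δ^r = δ^d * δ^(r-d) := by
        rw [← pow_add]
        congr 1
        omega
      have hδr : δ^(r-d) ≤ δ := by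
        calc δ^(r-d) ≤ δ^1 := pow_le_pow_of_le_one hδ0.le hδ1 (by omega)
          _ = δ := pow_one δ
      have hKge : 2^d * Bsum ≤ KK := by
        rw [hKK]
        have hge1 : (1:ℝ) ≤ (1 + d*M)^(d+1) := one_le_pow₀ (by linarith)
        have h2d : (0:ℝ) ≤ 2^d := by positivity
        nlinarith
      calc |δ^r / (Tder d θ * δ^d) * Sg|
          = δ^(r-d) / |Tder d θ| * |Sg| := by
            rw [abs_mul, abs_div, abs_mul, abs_pow, abs_pow, abs_of_pos hδ0, hpow2]
            field_simp
        _ ≤ δ / |Tder d θ| * (2^d * Bsum) := by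
            gcongr
            exact hSgbd.trans (by gcongr)
        _ ≤ δ / |Tder d θ| * KK := by gcongr
        _ ≤ ε := by
            rw [div_mul_eq_mul_div, div_le_iff₀ hTθ]
            nlinarith [hKKδ]
end
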